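/- arXiv:2309.11154 — 8 statements merged into one kernel-verified Lean document; each statement's English description precedes it below -/
import Mathlib

section
/- Let n ≥ 1 and 1 ≤ k ≤ l. For any m ≥ 1 let R_m be the multivariate polynomial ring over ℂ in the indeterminates y_{ij} with 1 ≤ i ≤ j ≤ m, let Y^{(m)} be the symmetric m×m matrix over R_m with entries Y^{(m)}_{ij} = y_{min(i,j),max(i,j)}, and let 𝓙_m ⊆ R_m be the ideal generated by all (n+1)×(n+1) minors of Y^{(m)} (the zero ideal if n+1 > m). Let ρ : R_k → R_l be the ℂ-algebra embedding sending y_{ij} to y_{ij}. Then the contraction (preimage) of 𝓙_l under ρ equals 𝓙_k. -/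
open MvPolynomial

set_option synthInstance.maxHeartbeats 1000000
set_option maxHeartbeats 1000000

noncomputable section

/-- R_m: polynomial ring over ℂ in the indeterminates y_{ij}, 1 ≤ i ≤ j ≤ m,
indexed by unordered pairs from Fin m. -/
abbrev R (m : ℕ) : Type := MvPolynomial (Sym2 (Fin m)) ℂ

/-- the generic symmetric m×m matrix Y^{(m)} with Y_{ij} = y_{min(i,j),max(i,j)} -/
def Ymat (m : ℕ) : Matrix (Fin m) (Fin m) (R m) := fun i j => X s(i, j)

/-- the ideal 𝓙_m generated by all (n+1)×(n+1) minors of Y^{(m)} -/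
def Jideal (n m : ℕ) : Ideal (R m) :=
  Ideal.span { p : R m | ∃ (f g : Fin (n + 1) → Fin m),
    StrictMono f ∧ StrictMono g ∧ p = ((Ymat m).submatrix f g).det }

/-- the ℂ-algebra embedding ρ : R_k → R_l sending y_{ij} to y_{ij} -/
def ρ (k l : ℕ) (h : k ≤ l) : R k →ₐ[ℂ] R l :=
  MvPolynomial.rename (Sym2.map (Fin.castLE h))

/-!
The substitution `π : R_l → R_k` sending `y_{ij}` to `y_{ij}` when `i, j < k` and to `0`
otherwise is a left inverse of `ρ`. Both maps send minors to minors or to `0`: `ρ` sends a minor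
of `Y^{(k)}` to the minor of `Y^{(l)}` on the same rows and columns, and `π` sends a minor of
`Y^{(l)}` to `0` if it meets a row or column `≥ k`, and to the same minor of `Y^{(k)}` otherwise.
Hence `ρ 𝓙_k ⊆ 𝓙_l` and `π 𝓙_l ⊆ 𝓙_k`, so `ρ p ∈ 𝓙_l` gives `p = π (ρ p) ∈ 𝓙_k`.
-/

def Matrix.minorIdeal {A ι κ : Type*} [CommRing A] [LinearOrder ι] [LinearOrder κ] (r : ℕ)
    (M : Matrix ι κ A) : Ideal A :=
  Ideal.span { p | ∃ (f : Fin r → ι) (g : Fin r → κ),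
    StrictMono f ∧ StrictMono g ∧ p = (M.submatrix f g).det }

namespace Matrix

variable {A B ι κ ι' κ' : Type*} [CommRing A] [CommRing B]
  [LinearOrder ι] [LinearOrder κ] [LinearOrder ι'] [LinearOrder κ']

theorem map_minorIdeal {F : Type*} [FunLike F A B] [RingHomClass F A B] (r : ℕ)
    (M : Matrix ι κ A) (φ : F) :
    (minorIdeal r M).map φ = minorIdeal r (M.map φ) := by
  rw [minorIdeal, minorIdeal, Ideal.map_span]
  congr 1
  ext p
  constructor
  · rintro ⟨_, ⟨f, g, hf, hg, rfl⟩, rfl⟩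
    exact ⟨f, g, hf, hg, by rw [submatrix_map]; exact (φ : A →+* B).map_det _⟩
  · rintro ⟨f, g, hf, hg, rfl⟩
    exact ⟨_, ⟨f, g, hf, hg, rfl⟩, by rw [submatrix_map]; exact (φ : A →+* B).map_det _⟩

theorem minorIdeal_submatrix_le (r : ℕ) (M : Matrix ι κ A) {e₁ : ι' → ι} {e₂ : κ' → κ}
    (he₁ : StrictMono e₁) (he₂ : StrictMono e₂) :
    minorIdeal r (M.submatrix e₁ e₂) ≤ minorIdeal r M := by
  rw [minorIdeal, Ideal.span_le]
  rintro _ ⟨f, g, hf, hg, rfl⟩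
  exact Ideal.subset_span ⟨e₁ ∘ f, e₂ ∘ g, he₁.comp hf, he₂.comp hg, rfl⟩

theorem minorIdeal_le_submatrix_of_eq_zero (r : ℕ) (M : Matrix ι κ A) {e₁ : ι' → ι}
    {e₂ : κ' → κ} (he₁ : StrictMono e₁) (he₂ : StrictMono e₂)
    (hrow : ∀ i ∉ Set.range e₁, ∀ j, M i j = 0) (hcol : ∀ j ∉ Set.range e₂, ∀ i, M i j = 0) :
    minorIdeal r M ≤ minorIdeal r (M.submatrix e₁ e₂) := by
  rw [minorIdeal, Ideal.span_le]
  rintro _ ⟨f, g, hf, hg, rfl⟩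
  by_cases hfe : ∀ a, f a ∈ Set.range e₁
  · by_cases hge : ∀ b, g b ∈ Set.range e₂
    · choose f' hf' using hfe
      choose g' hg' using hge
      have hfun : f = e₁ ∘ f' := funext fun a => (hf' a).symm
      have hgun : g = e₂ ∘ g' := funext fun b => (hg' b).symm
      subst hfun hgun
      exact Ideal.subset_span
        ⟨f', g', fun _ _ h => he₁.lt_iff_lt.mp (hf h), fun _ _ h => he₂.lt_iff_lt.mp (hg h), rfl⟩
    · obtain ⟨b, hb⟩ := not_forall.mp hge
      rw [det_eq_zero_of_column_eq_zero b fun a => hcol _ hb _]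
      exact Ideal.zero_mem _
  · obtain ⟨a, ha⟩ := not_forall.mp hfe
    rw [det_eq_zero_of_row_eq_zero a fun b => hrow _ ha _]
    exact Ideal.zero_mem _

end Matrix

theorem Ideal.comap_eq_of_leftInverse {A B : Type*} [CommRing A] [CommRing B] {ρ : A →+* B}
    {π : B →+* A} (hπρ : Function.LeftInverse π ρ) {I : Ideal A} {J : Ideal B}
    (hρ : I.map ρ ≤ J) (hπ : J.map π ≤ I) : J.comap ρ = I :=
  le_antisymm (fun p hp => hπρ p ▸ Ideal.map_le_iff_le_comap.mp hπ hp)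
    (Ideal.map_le_iff_le_comap.mp hρ)

theorem Jideal_eq_minorIdeal (n m : ℕ) : Jideal n m = (Ymat m).minorIdeal (n + 1) := rfl

def truncation (k l : ℕ) : R l →ₐ[ℂ] R k :=
  aeval <| Sym2.lift
    ⟨fun i j => if h : (i : ℕ) < k ∧ (j : ℕ) < k then X s(⟨i, h.1⟩, ⟨j, h.2⟩) else 0, by
      intro i j
      by_cases hi : (i : ℕ) < k <;> by_cases hj : (j : ℕ) < k <;> simp [hi, hj, Sym2.eq_swap]⟩

theorem truncation_X (k l : ℕ) (i j : Fin l) :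
    truncation k l (X s(i, j)) =
      if h : (i : ℕ) < k ∧ (j : ℕ) < k then X s(⟨i, h.1⟩, ⟨j, h.2⟩) else 0 := by
  simp only [truncation, aeval_X, Sym2.lift_mk]

theorem truncation_comp_ρ (k l : ℕ) (h : k ≤ l) :
    (truncation k l).comp (ρ k l h) = AlgHom.id ℂ (R k) := by
  refine algHom_ext fun s => ?_
  induction s using Sym2.ind with
  | _ i j =>
    simp only [AlgHom.comp_apply, ρ, rename_X, Sym2.map_mk, truncation_X, AlgHom.id_apply]
    exact dif_pos ⟨i.2, j.2⟩

theorem Ymat_map_ρ (k l : ℕ) (h : k ≤ l) :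
    (Ymat k).map (ρ k l h) = (Ymat l).submatrix (Fin.castLE h) (Fin.castLE h) := by
  ext i j : 1
  simp only [Matrix.map_apply, Matrix.submatrix_apply, Ymat, ρ, rename_X, Sym2.map_mk]

theorem Ymat_map_truncation_submatrix (k l : ℕ) (h : k ≤ l) :
    ((Ymat l).map (truncation k l)).submatrix (Fin.castLE h) (Fin.castLE h) = Ymat k := by
  ext i j : 1
  simp only [Matrix.submatrix_apply, Matrix.map_apply, Ymat, truncation_X]
  exact dif_pos ⟨i.2, j.2⟩

theorem Ymat_map_truncation_eq_zero (k l : ℕ) {i j : Fin l} (h : ¬((i : ℕ) < k ∧ (j : ℕ) < k)) :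
    (Ymat l).map (truncation k l) i j = 0 := by
  simp only [Matrix.map_apply, Ymat, truncation_X]
  exact dif_neg h

theorem Jideal_map_ρ_le (n k l : ℕ) (h : k ≤ l) :
    (Jideal n k).map (ρ k l h) ≤ Jideal n l := by
  rw [Jideal_eq_minorIdeal, Jideal_eq_minorIdeal]
  calc ((Ymat k).minorIdeal (n + 1)).map (ρ k l h)
      = ((Ymat l).submatrix (Fin.castLE h) (Fin.castLE h)).minorIdeal (n + 1) := by
        rw [Matrix.map_minorIdeal, Ymat_map_ρ]
    _ ≤ (Ymat l).minorIdeal (n + 1) :=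
        Matrix.minorIdeal_submatrix_le _ _ (Fin.strictMono_castLE h) (Fin.strictMono_castLE h)

theorem Jideal_map_truncation_le (n k l : ℕ) (h : k ≤ l) :
    (Jideal n l).map (truncation k l) ≤ Jideal n k := by
  have hrange : ∀ i : Fin l, i ∉ Set.range (Fin.castLE h) ↔ ¬(i : ℕ) < k := by
    simp [Fin.range_castLE]
  rw [Jideal_eq_minorIdeal, Jideal_eq_minorIdeal, Matrix.map_minorIdeal,
    ← Ymat_map_truncation_submatrix k l h]
  exact Matrix.minorIdeal_le_submatrix_of_eq_zero _ _
    (Fin.strictMono_castLE h) (Fin.strictMono_castLE h)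
    (fun i hi j => Ymat_map_truncation_eq_zero k l fun hij => (hrange i).mp hi hij.1)
    (fun j hj i => Ymat_map_truncation_eq_zero k l fun hij => (hrange j).mp hj hij.2)

theorem determinantal_ideal_contraction_general (n k l : ℕ) (hkl : k ≤ l) :
    (Jideal n l).comap (ρ k l hkl) = Jideal n k :=
  Ideal.comap_eq_of_leftInverse (π := (truncation k l).toRingHom)
    (DFunLike.congr_fun (truncation_comp_ρ k l hkl))
    (Jideal_map_ρ_le n k l hkl) (Jideal_map_truncation_le n k l hkl)

/-- the contraction of the determinantal ideal 𝓙_l under ρ equals 𝓙_k. -/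
theorem determinantal_ideal_contraction (n k l : ℕ) (hn : 1 ≤ n) (hk : 1 ≤ k)
    (hkl : k ≤ l) :
    (Jideal n l).comap (ρ k l hkl) = Jideal n k :=
  determinantal_ideal_contraction_general n k l hkl
end
end

section
/- For all integers n ≥ 1 and k ≥ 1, the multiplication map φ^{(n,k)} : 𝓘 ⊗_ℂ 𝓗 → 𝒫(M_{k×n}) is surjective; equivalently, every polynomial P ∈ 𝒫(M_{k×n}) can be written as a finite sum P = Σ_α I_α·H_α with all I_α ∈ 𝓘 and all H_α ∈ 𝓗. -/
open MvPolynomial TensorProduct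

set_option synthInstance.maxHeartbeats 1000000
set_option maxHeartbeats 1000000

noncomputable section

abbrev P (n k : ℕ) : Type := MvPolynomial (Fin k × Fin n) ℂ

/-- r_{ij} = Σ_m x_{im} x_{j,n+1-m} -/
def rpoly (n k : ℕ) (i j : Fin k) : P n k :=
  ∑ m : Fin n, X (i, m) * X (j, m.rev)

/-- the subalgebra of invariants -/
def InvAlg (n k : ℕ) : Subalgebra ℂ (P n k) :=
  Algebra.adjoin ℂ (Set.range fun p : Fin k × Fin k => rpoly n k p.1 p.2)

/-- Laplace operators -/
def Δop (n k : ℕ) (i j : Fin k) : P n k →ₗ[ℂ] P n k :=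
  ∑ m : Fin n, ((pderiv (i, m)).toLinearMap ∘ₗ (pderiv (j, m.rev)).toLinearMap)

/-- harmonic polynomials -/
def Harm (n k : ℕ) : Submodule ℂ (P n k) :=
  ⨅ (i : Fin k) (j : Fin k), LinearMap.ker (Δop n k i j)

/-- multiplication map restricted to a subspace F of harmonics -/
def φF (n k : ℕ) (F : Submodule ℂ (P n k)) :
    (InvAlg n k) ⊗[ℂ] F →ₗ[ℂ] P n k :=
  TensorProduct.lift ((LinearMap.mul ℂ (P n k)).compl₁₂
    (InvAlg n k).val.toLinearMap F.subtype)

def φ (n k : ℕ) : (InvAlg n k) ⊗[ℂ] (Harm n k) →ₗ[ℂ] P n k := φF n k (Harm n k)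

/-!
For the Fischer form `⟨f, g⟩ = ∑_α α! f_α g_α`, multiplication by `x_p` is adjoint to `∂_p`, so
multiplication by `r_{ij}` is adjoint to `Δ_{ij}`; and `⟨conj g, g⟩ > 0` for `g ≠ 0`. Hence the
form is nondegenerate on the conjugation-stable finite-dimensional space `W_e = ∑ r_{ij} 𝒫_{≤e}`,
and every `f` of degree `≤ e + 2` is `w + u` with `w ∈ W_e` and `u ⊥ W_e`. Then `Δ_{ij} u` has
degree `≤ e`, so `r_{ij} · conj (Δ_{ij} u) ∈ W_e` gives `⟨conj (Δ_{ij} u), Δ_{ij} u⟩ = 0`: `u` is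
harmonic. Induction on the degree finishes the proof.
-/

namespace Finsupp

open scoped Nat

variable {σ : Type*}

def factorial (α : σ →₀ ℕ) : ℕ := α.prod fun _ e => e !

theorem factorial_pos (α : σ →₀ ℕ) : 0 < α.factorial :=
  Finset.prod_pos fun _ _ => Nat.factorial_pos _

theorem factorial_add_single (α : σ →₀ ℕ) (i : σ) :
    (α + single i 1).factorial = (α i + 1) * α.factorial := by
  classical
  rw [factorial, factorial, ← mul_prod_erase' _ i (fun _ e => e !) fun _ => Nat.factorial_zero,
    ← mul_prod_erase' α i (fun _ e => e !) fun _ => Nat.factorial_zero, erase_add,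
    erase_single, add_zero, add_apply, single_eq_same, Nat.factorial_succ, mul_assoc]

end Finsupp

namespace Submodule

variable {K V : Type*} [Field K] [AddCommGroup V] [Module K V]

theorem sup_orthogonalBilin_eq_top {B : V →ₗ[K] V →ₗ[K] K} {W : Submodule K V}
    [FiniteDimensional K W] (hW : (B.domRestrict₁₂ W W).SeparatingRight) :
    W ⊔ W.orthogonalBilin B = ⊤ := by
  set T : V →ₗ[K] Module.Dual K W := (B.domRestrict W).flip
  have hinj : Function.Injective (T ∘ₗ W.subtype) := by
    rw [← LinearMap.ker_eq_bot, eq_bot_iff]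
    exact fun w hw => hW w fun x => LinearMap.congr_fun hw x
  have hsurj : Function.Surjective (T ∘ₗ W.subtype) :=
    (LinearMap.injective_iff_surjective_of_finrank_eq_finrank
      Subspace.dual_finrank_eq.symm).mp hinj
  refine eq_top_iff.mpr fun v _ => ?_
  obtain ⟨w, hw⟩ := hsurj (T v)
  refine mem_sup.mpr ⟨w, w.2, v - w, fun x hx => ?_, add_sub_cancel _ _⟩
  have := LinearMap.congr_fun hw ⟨x, hx⟩
  simp only [T, LinearMap.comp_apply, LinearMap.flip_apply, LinearMap.domRestrict_apply,
    subtype_apply] at this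
  rw [map_sub, this, sub_self]

end Submodule

namespace MvPolynomial

section CommSemiring

variable {σ R : Type*} [CommSemiring R]

theorem totalDegree_pderiv_le (i : σ) (f : MvPolynomial σ R) :
    (pderiv i f).totalDegree ≤ f.totalDegree - 1 := by
  refine Finset.sup_le fun m hm => ?_
  rw [mem_support_iff, coeff_pderiv] at hm
  have := le_totalDegree (mem_support_iff.mpr (left_ne_zero_of_mul hm))
  rw [Finsupp.sum_add_index' (fun _ => rfl) (fun _ _ _ => rfl),
    Finsupp.sum_single_index rfl] at this
  omega

theorem pderiv_eq_zero_of_totalDegree_eq_zero (i : σ) {f : MvPolynomial σ R}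
    (hf : f.totalDegree = 0) : pderiv i f = 0 := by
  rw [totalDegree_eq_zero_iff_eq_C.mp hf, pderiv_C]

variable (σ R) in
def fischer : MvPolynomial σ R →ₗ[R] MvPolynomial σ R →ₗ[R] R :=
  (basisMonomials σ R).constr R fun α => (α.factorial : R) • lcoeff R α

theorem fischer_monomial (α : σ →₀ ℕ) (a : R) (g : MvPolynomial σ R) :
    fischer σ R (monomial α a) g = a * α.factorial * coeff α g := by
  have : monomial α a = a • basisMonomials σ R α := by
    rw [coe_basisMonomials, smul_monomial, smul_eq_mul, mul_one]
  rw [this, fischer, map_smul, Module.Basis.constr_basis]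
  simp only [LinearMap.smul_apply, lcoeff_apply, smul_eq_mul, mul_assoc]

theorem fischer_apply (f g : MvPolynomial σ R) :
    fischer σ R f g = ∑ α ∈ f.support, coeff α f * α.factorial * coeff α g := by
  conv_lhs => rw [f.as_sum, map_sum, LinearMap.sum_apply]
  exact Finset.sum_congr rfl fun α _ => fischer_monomial α _ g

theorem fischer_X_mul (i : σ) (f g : MvPolynomial σ R) :
    fischer σ R (X i * f) g = fischer σ R f (pderiv i g) := by
  induction f using MvPolynomial.induction_on' with
  | monomial α a =>
    rw [X, monomial_mul, one_mul, add_comm, fischer_monomial, fischer_monomial, coeff_pderiv,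
      Finsupp.factorial_add_single]
    push_cast
    ring
  | add f₁ f₂ h₁ h₂ =>
    rw [mul_add, map_add, map_add, LinearMap.add_apply, LinearMap.add_apply, h₁, h₂]

end CommSemiring

variable {σ 𝕜 : Type*} [RCLike 𝕜]

theorem fischer_map_conj_self (g : MvPolynomial σ 𝕜) :
    fischer σ 𝕜 (map (starRingEnd 𝕜) g) g =
      ((∑ α ∈ g.support, α.factorial * ‖coeff α g‖ ^ 2 : ℝ) : 𝕜) := by
  rw [fischer_apply, support_map_of_injective _ (starRingEnd 𝕜).injective]
  push_cast
  refine Finset.sum_congr rfl fun α _ => ?_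
  rw [coeff_map, ← RCLike.conj_mul]
  ring

theorem fischer_map_conj_self_ne_zero {g : MvPolynomial σ 𝕜} (hg : g ≠ 0) :
    fischer σ 𝕜 (map (starRingEnd 𝕜) g) g ≠ 0 := by
  rw [fischer_map_conj_self, RCLike.ofReal_ne_zero]
  refine (Finset.sum_pos (fun α hα => ?_) (support_nonempty.mpr hg)).ne'
  have := α.factorial_pos
  have := norm_pos_iff.mpr (mem_support_iff.mp hα)
  positivity

theorem fischer_domRestrict_separatingRight {W : Submodule 𝕜 (MvPolynomial σ 𝕜)}
    (hW : ∀ w ∈ W, map (starRingEnd 𝕜) w ∈ W) :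
    ((fischer σ 𝕜).domRestrict₁₂ W W).SeparatingRight := by
  intro w hw
  by_contra hne
  exact fischer_map_conj_self_ne_zero (Subtype.coe_ne_coe.mpr hne) (hw ⟨_, hW w w.2⟩)

end MvPolynomial

section Orthogonal

variable {n k : ℕ}

theorem rpoly_mem_InvAlg (i j : Fin k) : rpoly n k i j ∈ InvAlg n k :=
  Algebra.subset_adjoin ⟨(i, j), rfl⟩

theorem totalDegree_rpoly_le (i j : Fin k) : (rpoly n k i j).totalDegree ≤ 2 :=
  totalDegree_finsetSum_le fun m _ => (totalDegree_mul _ _).trans <| by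
    rw [totalDegree_X, totalDegree_X]

theorem map_conj_rpoly (i j : Fin k) : map (starRingEnd ℂ) (rpoly n k i j) = rpoly n k i j := by
  simp [rpoly]

theorem fischer_rpoly_mul (i j : Fin k) (f g : P n k) :
    fischer _ ℂ (rpoly n k i j * f) g = fischer _ ℂ f (Δop n k i j g) := by
  simp only [rpoly, Finset.sum_mul, map_sum, LinearMap.sum_apply, Δop]
  refine Finset.sum_congr rfl fun m _ => ?_
  rw [mul_comm (X _), mul_assoc, fischer_X_mul, fischer_X_mul]
  rfl

theorem totalDegree_Δop_le (i j : Fin k) (f : P n k) :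
    (Δop n k i j f).totalDegree ≤ f.totalDegree - 2 := by
  simp only [Δop, LinearMap.sum_apply]
  refine totalDegree_finsetSum_le fun m _ => ?_
  have h₁ := totalDegree_pderiv_le (j, m.rev) f
  have h₂ := totalDegree_pderiv_le (i, m) (pderiv (j, m.rev) f)
  simp only [LinearMap.comp_apply, Derivation.coeFn_coe]
  omega

theorem mem_Harm_of_totalDegree_le_one {f : P n k} (hf : f.totalDegree ≤ 1) : f ∈ Harm n k := by
  simp only [Harm, Submodule.mem_iInf, LinearMap.mem_ker, Δop, LinearMap.sum_apply,
    LinearMap.comp_apply, Derivation.coeFn_coe]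
  refine fun i j => Finset.sum_eq_zero fun m _ => pderiv_eq_zero_of_totalDegree_eq_zero _ ?_
  have := totalDegree_pderiv_le (j, m.rev) f
  omega

variable (n k) in
def rpolyMulSpan (e : ℕ) : Submodule ℂ (P n k) :=
  ⨆ p : Fin k × Fin k,
    (restrictTotalDegree _ ℂ e).map (LinearMap.mulLeft ℂ (rpoly n k p.1 p.2))

instance (e : ℕ) : FiniteDimensional ℂ (rpolyMulSpan n k e) := by
  unfold rpolyMulSpan
  infer_instance

theorem rpoly_mul_mem_rpolyMulSpan {e : ℕ} (i j : Fin k) {f : P n k} (hf : f.totalDegree ≤ e) :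
    rpoly n k i j * f ∈ rpolyMulSpan n k e :=
  Submodule.mem_iSup_of_mem (i, j) ⟨f, (mem_restrictTotalDegree _ _ _).mpr hf, rfl⟩

theorem rpolyMulSpan_le (e : ℕ) :
    rpolyMulSpan n k e ≤ restrictTotalDegree _ ℂ (e + 2) := by
  refine iSup_le fun p => Submodule.map_le_iff_le_comap.mpr fun f hf => ?_
  rw [mem_restrictTotalDegree] at hf
  have := totalDegree_rpoly_le (n := n) p.1 p.2
  exact (mem_restrictTotalDegree _ _ _).mpr ((totalDegree_mul _ _).trans (by omega))

theorem map_conj_mem_rpolyMulSpan {e : ℕ} {w : P n k} (hw : w ∈ rpolyMulSpan n k e) :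
    map (starRingEnd ℂ) w ∈ rpolyMulSpan n k e := by
  induction hw using Submodule.iSup_induction' with
  | mem p _ hx =>
    obtain ⟨f, hf, rfl⟩ := hx
    rw [LinearMap.mulLeft_apply, map_mul, map_conj_rpoly]
    exact rpoly_mul_mem_rpolyMulSpan p.1 p.2 <|
      (totalDegree_le_of_support_subset (support_map_subset _ _)).trans
        ((mem_restrictTotalDegree _ _ _).mp hf)
  | zero => simp
  | add x y _ _ hx hy => simpa using Submodule.add_mem _ hx hy

theorem restrictTotalDegree_le_rpolyMulSpan_sup_Harm (e : ℕ) :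
    restrictTotalDegree _ ℂ (e + 2) ≤ rpolyMulSpan n k e ⊔ Harm n k := by
  intro f hf
  have hsplit : rpolyMulSpan n k e ⊔ (rpolyMulSpan n k e).orthogonalBilin (fischer _ ℂ) = ⊤ :=
    Submodule.sup_orthogonalBilin_eq_top <|
      fischer_domRestrict_separatingRight fun _ => map_conj_mem_rpolyMulSpan
  obtain ⟨w, hw, u, hu, rfl⟩ := Submodule.mem_sup.mp (hsplit ▸ Submodule.mem_top (x := f))
  refine Submodule.add_mem_sup hw ?_
  have hu_deg : u.totalDegree ≤ e + 2 := by
    have := Submodule.sub_mem _ hf (rpolyMulSpan_le e hw)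
    rwa [add_sub_cancel_left, mem_restrictTotalDegree] at this
  simp only [Harm, Submodule.mem_iInf, LinearMap.mem_ker]
  intro i j
  by_contra hne
  refine fischer_map_conj_self_ne_zero hne ?_
  rw [← fischer_rpoly_mul]
  refine hu _ (rpoly_mul_mem_rpolyMulSpan i j ?_)
  have := totalDegree_Δop_le i j u
  exact (totalDegree_le_of_support_subset (support_map_subset _ _)).trans (by omega)

end Orthogonal

section Range

variable {n k : ℕ}

theorem le_range_φF (F : Submodule ℂ (P n k)) : F ≤ LinearMap.range (φF n k F) :=
  fun h hh => ⟨1 ⊗ₜ ⟨h, hh⟩, by simp [φF]⟩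

theorem φF_comp_rTensor_mulLeft (F : Submodule ℂ (P n k)) (r : InvAlg n k) :
    φF n k F ∘ₗ (LinearMap.mulLeft ℂ r).rTensor F =
      LinearMap.mulLeft ℂ (r : P n k) ∘ₗ φF n k F :=
  TensorProduct.ext' fun _ _ => by simp [φF, mul_assoc]

theorem mul_mem_range_φF (F : Submodule ℂ (P n k)) {r x : P n k} (hr : r ∈ InvAlg n k)
    (hx : x ∈ LinearMap.range (φF n k F)) : r * x ∈ LinearMap.range (φF n k F) := by
  obtain ⟨t, rfl⟩ := hx
  exact ⟨(LinearMap.mulLeft ℂ (⟨r, hr⟩ : InvAlg n k)).rTensor F t,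
    LinearMap.congr_fun (φF_comp_rTensor_mulLeft F ⟨r, hr⟩) t⟩

theorem rpolyMulSpan_le_range_φF (F : Submodule ℂ (P n k)) {e : ℕ}
    (h : restrictTotalDegree _ ℂ e ≤ LinearMap.range (φF n k F)) :
    rpolyMulSpan n k e ≤ LinearMap.range (φF n k F) :=
  iSup_le fun p => Submodule.map_le_iff_le_comap.mpr fun _ hf =>
    mul_mem_range_φF F (rpoly_mem_InvAlg p.1 p.2) (h hf)

theorem restrictTotalDegree_le_range_φ :
    ∀ d, restrictTotalDegree _ ℂ d ≤ LinearMap.range (φ n k)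
  | 0 | 1 => fun _ hf => le_range_φF _ <| mem_Harm_of_totalDegree_le_one <| by
      rw [mem_restrictTotalDegree] at hf
      omega
  | e + 2 => (restrictTotalDegree_le_rpolyMulSpan_sup_Harm e).trans <|
      sup_le (rpolyMulSpan_le_range_φF _ (restrictTotalDegree_le_range_φ e)) (le_range_φF _)

end Range

theorem separation_of_variables_surjective_general (n k : ℕ) :
    Function.Surjective (φ n k) := fun f =>
  restrictTotalDegree_le_range_φ f.totalDegree ((mem_restrictTotalDegree _ _ _).mpr le_rfl)

/-- the multiplication map φ^{(n,k)} : 𝓘 ⊗ 𝓗 → 𝒫 is surjective: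
every polynomial is a finite sum of products of an invariant with a harmonic. -/
theorem separation_of_variables_surjective (n k : ℕ) (hn : 1 ≤ n) (hk : 1 ≤ k) :
    Function.Surjective (φ n k) :=
  separation_of_variables_surjective_general n k
end
end

section
/- For all n, k ≥ 1, every (n+1)×(n+1) minor of the matrix M^{(n,k)} is the zero polynomial; that is, for any strictly increasing choices of n+1 rows and n+1 columns of M^{(n,k)}, the determinant of the corresponding submatrix vanishes in 𝒫(M_{k×n}). -/
open MvPolynomial

set_option synthInstance.maxHeartbeats 1000000
set_option maxHeartbeats 1000000

noncomputable section

/-- the symmetric (k+n)×(k+n) matrix M^{(n,k)} with blocks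
  (x J_n xᵀ | x J_n ; J_n xᵀ | J_n). -/
def Mmat (n k : ℕ) : Matrix (Fin (k + n)) (Fin (k + n)) (P n k) :=
  (Matrix.fromBlocks
    (Matrix.of fun i j : Fin k => rpoly n k i j)
    (Matrix.of fun (i : Fin k) (b : Fin n) => (X (i, b.rev) : P n k))
    (Matrix.of fun (a : Fin n) (j : Fin k) => (X (j, a.rev) : P n k))
    (Matrix.of fun a b : Fin n => if b = a.rev then (1 : P n k) else 0)).submatrix
      finSumFinEquiv.symm finSumFinEquiv.symm

/-- determinant of a product with inner dimension `n` and outer `n+1` vanishes. -/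
lemma det_mul_rect {R : Type*} [CommRing R] (n : ℕ)
    (A : Matrix (Fin (n + 1)) (Fin n) R) (B : Matrix (Fin n) (Fin (n + 1)) R) :
    (A * B).det = 0 := by
  set A' : Matrix (Fin (n + 1)) (Fin (n + 1)) R :=
    fun i j => if h : (j : ℕ) < n then A i ⟨j, h⟩ else 0 with hA'
  set B' : Matrix (Fin (n + 1)) (Fin (n + 1)) R :=
    fun i j => if h : (i : ℕ) < n then B ⟨i, h⟩ j else 0 with hB'
  have hAB : A * B = A' * B' := by
    ext i j
    simp only [Matrix.mul_apply]
    rw [Fin.sum_univ_castSucc]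
    simp [hA', hB', Fin.castSucc, Fin.is_lt]
  rw [hAB, Matrix.det_mul]
  have : A'.det = 0 := by
    apply Matrix.det_eq_zero_of_column_eq_zero (Fin.last n)
    intro i
    simp [hA']
  rw [this, zero_mul]

/-- The left factor `[x ; I]` (reindexed by the sum decomposition). -/
def Bfac (n k : ℕ) : Matrix (Fin k ⊕ Fin n) (Fin n) (P n k) :=
  fun s m => Sum.elim (fun i => (X (i, m) : P n k))
    (fun a => if m = a then (1 : P n k) else 0) s

/-- The right factor `J_n · [x ; I]ᵀ`. -/
def Cfac (n k : ℕ) : Matrix (Fin n) (Fin k ⊕ Fin n) (P n k) :=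
  fun m s => Sum.elim (fun j => (X (j, m.rev) : P n k))
    (fun b => if b = m.rev then (1 : P n k) else 0) s

lemma blocks_eq (n k : ℕ) :
    Matrix.fromBlocks
      (Matrix.of fun i j : Fin k => rpoly n k i j)
      (Matrix.of fun (i : Fin k) (b : Fin n) => (X (i, b.rev) : P n k))
      (Matrix.of fun (a : Fin n) (j : Fin k) => (X (j, a.rev) : P n k))
      (Matrix.of fun a b : Fin n => if b = a.rev then (1 : P n k) else 0) =
    Bfac n k * Cfac n k := by
  ext s t
  rcases s with i | a <;> rcases t with j | b <;>
    simp only [Matrix.mul_apply, Bfac, Cfac, Sum.elim_inl, Sum.elim_inr,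
      Matrix.fromBlocks_apply₁₁, Matrix.fromBlocks_apply₁₂,
      Matrix.fromBlocks_apply₂₁, Matrix.fromBlocks_apply₂₂, Matrix.of_apply]
  · rfl
  · -- Σ_m X(i,m) * [b = m.rev] = X (i, b.rev)
    rw [Finset.sum_eq_single b.rev]
    · simp
    · intro m _ hm
      rw [if_neg, mul_zero]
      intro hb
      exact hm (by simp [hb])
    · simp
  · rw [Finset.sum_eq_single a]
    · simp
    · intro m _ hm; simp [if_neg hm]
    · simp
  · rw [Finset.sum_eq_single a]
    · simp
    · intro m _ hm; simp [if_neg hm]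
    · simp

lemma Mmat_eq_mul (n k : ℕ) :
    Mmat n k = (Bfac n k * Cfac n k).submatrix
      finSumFinEquiv.symm finSumFinEquiv.symm := by
  unfold Mmat
  rw [blocks_eq]

/-- every (n+1)×(n+1) minor of M^{(n,k)} vanishes. -/
theorem minors_of_M_vanish (n k : ℕ) (hn : 1 ≤ n) (hk : 1 ≤ k)
    (f g : Fin (n + 1) → Fin (k + n)) (hf : StrictMono f) (hg : StrictMono g) :
    ((Mmat n k).submatrix f g).det = 0 := by
  rw [Mmat_eq_mul, Matrix.submatrix_submatrix]
  have : (Bfac n k * Cfac n k).submatrix (finSumFinEquiv.symm ∘ f)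
      (finSumFinEquiv.symm ∘ g) =
      ((Bfac n k).submatrix (finSumFinEquiv.symm ∘ f) id) *
      ((Cfac n k).submatrix id (finSumFinEquiv.symm ∘ g)) := by
    ext i j
    simp [Matrix.mul_apply, Matrix.submatrix_apply]
  rw [this]
  exact det_mul_rect n _ _
end
end

section
/- Suppose either n = 2k − 2 with k ≥ 2, or n = 2k − 3 with k ≥ 3. Then D_{1,1} = det M̃_{1,1} lies in the subspace 𝓘 ⊗_ℂ 𝓗 of 𝓘 ⊗_ℂ 𝒫, is nonzero, and satisfies ψ(D_{1,1}) = 0. Consequently, Ker φ^{(n,k)} ≠ 0 in these boundary non-stable cases. -/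
open MvPolynomial TensorProduct

set_option synthInstance.maxHeartbeats 1000000
set_option maxHeartbeats 1000000

noncomputable section

/-- r_{ij} as an element of the invariant subalgebra -/
def rInv (n k : ℕ) (i j : Fin k) : InvAlg n k :=
  ⟨rpoly n k i j, Algebra.subset_adjoin ⟨(i, j), rfl⟩⟩

/-- the multiplication map ψ : 𝓘 ⊗ 𝒫 → 𝒫 (an algebra map) -/
def ψmul (n k : ℕ) : ((InvAlg n k) ⊗[ℂ] (P n k)) →ₐ[ℂ] P n k :=
  Algebra.TensorProduct.productMap (InvAlg n k).val (AlgHom.id ℂ (P n k))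

/-- the canonical inclusion 𝓘 ⊗ 𝓗 → 𝓘 ⊗ 𝒫 -/
def incl (n k : ℕ) : (InvAlg n k) ⊗[ℂ] (Harm n k) →ₗ[ℂ] (InvAlg n k) ⊗[ℂ] (P n k) :=
  LinearMap.lTensor (InvAlg n k) (Harm n k).subtype

/-- the matrix M̃^{(n,k)} over 𝓘 ⊗ 𝒫: entries of the top-left invariant block are
r_{ij} ⊗ 1, all other entries P of M^{(n,k)} become 1 ⊗ P. -/
def Mt (n k : ℕ) :
    Matrix (Fin (k + n)) (Fin (k + n)) ((InvAlg n k) ⊗[ℂ] (P n k)) :=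
  (Matrix.fromBlocks
    (Matrix.of fun i j : Fin k => (rInv n k i j) ⊗ₜ[ℂ] (1 : P n k))
    (Matrix.of fun (i : Fin k) (b : Fin n) =>
      (1 : InvAlg n k) ⊗ₜ[ℂ] (X (i, b.rev) : P n k))
    (Matrix.of fun (a : Fin n) (j : Fin k) =>
      (1 : InvAlg n k) ⊗ₜ[ℂ] (X (j, a.rev) : P n k))
    (Matrix.of fun a b : Fin n =>
      (1 : InvAlg n k) ⊗ₜ[ℂ] (if b = a.rev then (1 : P n k) else 0))).submatrix
      finSumFinEquiv.symm finSumFinEquiv.symm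

/-- D_{a+1,b+1} = det M̃_{a+1,b+1}, the minor of M̃^{(n,k)} on the (n+1) consecutive
rows starting at row a and columns starting at column b (0-indexed offsets). -/
def Dmin (n k : ℕ) (a b : ℕ) (ha : a < k) (hb : b < k) : (InvAlg n k) ⊗[ℂ] (P n k) :=
  ((Mt n k).submatrix
    (fun i : Fin (n + 1) => (⟨a + i.val, by have := i.isLt; omega⟩ : Fin (k + n)))
    (fun j : Fin (n + 1) => (⟨b + j.val, by have := j.isLt; omega⟩ : Fin (k + n)))).det

/-!
`ψ` sends `M̃` to `M^{(n,k)} = A J_n Aᵀ` with `A = (x; 1_n)` of size `(k + n) × n`, so every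
`(n + 1)`-minor of it vanishes; in particular `ψ(D_{1,1}) = 0`.

The entries of `M̃_{1,1}` outside its invariant block only involve variables `x_{im}` with
`m ≥ k - 1` (0-indexed). When `n ≤ 2k - 2`, polynomials in these variables are harmonic, since
`Δ_{ij}` differentiates in the columns `m` and `n - 1 - m`, one of which is `< k - 1`.
Hence `D_{1,1} ∈ 𝓘 ⊗ 𝓗`.

`D_{1,1} ≠ 0` because the character of `𝓘 ⊗ 𝒫` that evaluates the two tensor factors at two
different points (so it does not factor through `ψ`) turns `M̃_{1,1}` into a permutation matrix
when `n = 2k - 2` or `n = 2k - 3`.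
-/

open Matrix

theorem Matrix.det_mul_through_smaller_eq_zero {R : Type*} [CommRing R] {n : ℕ}
    (A : Matrix (Fin (n + 1)) (Fin n) R) (B : Matrix (Fin n) (Fin (n + 1)) R) :
    (A * B).det = 0 := by
  have hpad : A * B = (fromCols A (0 : Matrix _ (Fin 1) R)).submatrix id finSumFinEquiv.symm *
      (fromRows B (0 : Matrix (Fin 1) _ R)).submatrix finSumFinEquiv.symm id := by
    rw [submatrix_mul_equiv, fromCols_mul_fromRows, Matrix.mul_zero, add_zero, submatrix_id_id]
  rw [hpad, det_mul, det_eq_zero_of_column_eq_zero (Fin.last n) (fun i => by simp), zero_mul]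

theorem Matrix.exists_det_eq_of_forall_exists {A B F ι : Type*} [CommRing A] [CommRing B]
    [FunLike F A B] [RingHomClass F A B] [Fintype ι] [DecidableEq ι] (f : F)
    (M : Matrix ι ι B) (hM : ∀ i j, ∃ a, f a = M i j) : ∃ a, f a = M.det := by
  choose N hN using hM
  exact ⟨(of N).det, (RingHom.map_det (f : A →+* B) _).trans <| by congr 1; ext i j; exact hN i j⟩

theorem MvPolynomial.pderiv_eq_zero_of_mem_supported {σ R : Type*} [CommSemiring R]
    {s : Set σ} {p : MvPolynomial σ R} (hp : p ∈ supported R s) {v : σ} (hv : v ∉ s) :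
    pderiv v p = 0 :=
  pderiv_eq_zero_of_notMem_vars fun hmem => hv (mem_supported.mp hp hmem)

theorem MvPolynomial.pderiv_mem_supported {σ R : Type*} [CommSemiring R] {s : Set σ}
    {p : MvPolynomial σ R} (hp : p ∈ supported R s) (v : σ) : pderiv v p ∈ supported R s := by
  by_cases hv : v ∈ s
  · rw [supported_eq_range_rename, AlgHom.mem_range] at hp ⊢
    obtain ⟨q, rfl⟩ := hp
    exact ⟨pderiv (⟨v, hv⟩ : s) q, (pderiv_rename Subtype.val_injective ⟨v, hv⟩ q).symm⟩
  · rw [pderiv_eq_zero_of_mem_supported hp hv]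
    exact zero_mem _

namespace HoweDuality

variable {n k : ℕ}

-- `revGram y = y J_n yᵀ`, and `blockMatrix (revGram x) x` is `M^{(n,k)}` in the block coordinates
-- `Fin k ⊕ Fin n`. Evaluating the two tensor factors of `M̃` by different algebra maps yields
-- `blockMatrix (revGram y) z` with independent `y` and `z`.
def revGram {R : Type*} [CommRing R] (y : Matrix (Fin k) (Fin n) R) :
    Matrix (Fin k) (Fin k) R :=
  of fun i j => ∑ m, y i m * y j m.rev

def blockMatrix {R : Type*} [CommRing R] (Q : Matrix (Fin k) (Fin k) R)
    (z : Matrix (Fin k) (Fin n) R) : Matrix (Fin k ⊕ Fin n) (Fin k ⊕ Fin n) R :=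
  fromBlocks Q (of fun i b => z i b.rev) (of fun a j => z j a.rev)
    (of fun a b => if b = a.rev then 1 else 0)

theorem blockMatrix_revGram_self {R : Type*} [CommRing R] (y : Matrix (Fin k) (Fin n) R) :
    blockMatrix (revGram y) y =
      (fromRows y 1 : Matrix (Fin k ⊕ Fin n) (Fin n) R) *
      (fromCols (of fun m j => y j m.rev) (of fun m b => if m = b.rev then 1 else 0) :
        Matrix (Fin n) (Fin k ⊕ Fin n) R) := by
  ext (i | a) (j | b) <;>
    simp [blockMatrix, revGram, Matrix.mul_apply, Matrix.one_apply]
  exact if_congr (eq_comm.trans Fin.rev_eq_iff) rfl rfl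

theorem det_submatrix_blockMatrix_revGram_self {R : Type*} [CommRing R]
    (y : Matrix (Fin k) (Fin n) R) (g : Fin (n + 1) → Fin k ⊕ Fin n) :
    ((blockMatrix (revGram y) y).submatrix g g).det = 0 := by
  rw [blockMatrix_revGram_self, submatrix_mul _ _ _ id _ Function.bijective_id]
  exact det_mul_through_smaller_eq_zero _ _

variable (n k) in
def genericMatrix : Matrix (Fin k) (Fin n) (P n k) := of fun i m => X (i, m)

theorem genericMatrix_map_aeval {R : Type*} [CommRing R] [Algebra ℂ R]
    (y : Matrix (Fin k) (Fin n) R) :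
    (genericMatrix n k).map (aeval (Function.uncurry y)) = y := by
  ext i m
  simp [genericMatrix, Function.uncurry]

theorem submatrix_Mt_map_productMap {R : Type*} [CommRing R] [Algebra ℂ R]
    (F G : P n k →ₐ[ℂ] R) :
    ((Mt n k).map (Algebra.TensorProduct.productMap (F.comp (InvAlg n k).val) G)).submatrix
      finSumFinEquiv finSumFinEquiv =
      blockMatrix (revGram ((genericMatrix n k).map F)) ((genericMatrix n k).map G) := by
  ext (i | a) (j | b) <;>
    simp [Mt, blockMatrix, revGram, genericMatrix, rInv, rpoly]

def minorIdx (hk : 0 < k) (r : Fin (n + 1)) : Fin k ⊕ Fin n :=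
  finSumFinEquiv.symm (Fin.castLE (by omega) r)

theorem minorIdx_of_lt (hk : 0 < k) {r : Fin (n + 1)} (hr : r.val < k) :
    minorIdx hk r = Sum.inl ⟨r, hr⟩ := by
  rw [minorIdx, Equiv.symm_apply_eq, finSumFinEquiv_apply_left]
  rfl

theorem minorIdx_of_le (hk : 0 < k) {r : Fin (n + 1)} (hr : k ≤ r.val) :
    minorIdx hk r = Sum.inr ⟨r - k, by omega⟩ := by
  rw [minorIdx, Equiv.symm_apply_eq, finSumFinEquiv_apply_right]
  ext
  simp only [Fin.val_castLE, Fin.natAdd_mk]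
  omega

theorem Dmin_zero_zero_eq (hk : 0 < k) :
    Dmin n k 0 0 hk hk = (((Mt n k).submatrix finSumFinEquiv finSumFinEquiv).submatrix
      (minorIdx hk) (minorIdx hk)).det := by
  rw [submatrix_submatrix, Dmin]
  congr 1
  ext r c
  simp only [zero_add, submatrix_apply, Function.comp_apply, minorIdx, Equiv.apply_symm_apply]
  rfl

theorem map_Dmin_zero_zero (hk : 0 < k) {R : Type*} [CommRing R] [Algebra ℂ R]
    (F G : P n k →ₐ[ℂ] R) :
    Algebra.TensorProduct.productMap (F.comp (InvAlg n k).val) G (Dmin n k 0 0 hk hk) =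
      ((blockMatrix (revGram ((genericMatrix n k).map F)) ((genericMatrix n k).map G)).submatrix
        (minorIdx hk) (minorIdx hk)).det := by
  rw [Dmin_zero_zero_eq, ← submatrix_Mt_map_productMap]
  exact AlgHom.map_det (R := ℂ) (S := InvAlg n k ⊗[ℂ] P n k) _ _

theorem ψmul_Dmin_zero_zero_eq_zero (hk : 0 < k) : ψmul n k (Dmin n k 0 0 hk hk) = 0 := by
  have hψ : ψmul n k = Algebra.TensorProduct.productMap
      ((AlgHom.id ℂ (P n k)).comp (InvAlg n k).val) (AlgHom.id ℂ (P n k)) := by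
    rw [AlgHom.id_comp]; rfl
  rw [hψ, map_Dmin_zero_zero, AlgHom.coe_id, Matrix.map_id]
  exact det_submatrix_blockMatrix_revGram_self _ _

variable (n k) in
def rightColumns : Set (Fin k × Fin n) := {v | k - 1 ≤ v.2.val}

theorem supported_rightColumns_le_harm (h : n + 2 ≤ 2 * k) :
    Subalgebra.toSubmodule (supported ℂ (rightColumns n k)) ≤ Harm n k := by
  intro p hp
  simp only [Harm, Submodule.mem_iInf, LinearMap.mem_ker, Δop, LinearMap.sum_apply,
    LinearMap.comp_apply, Derivation.coeFn_coe]
  intro i j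
  refine Finset.sum_eq_zero fun m _ => ?_
  by_cases hm : (j, m.rev) ∈ rightColumns n k
  · -- the columns `m` and `m.rev` add up to `n - 1 < 2 (k - 1)`
    have hm' : (i, m) ∉ rightColumns n k := by
      simp only [rightColumns, Set.mem_ofPred_eq, Fin.val_rev] at hm ⊢
      omega
    exact pderiv_eq_zero_of_mem_supported (pderiv_mem_supported hp _) hm'
  · simp [pderiv_eq_zero_of_mem_supported hp hm]

variable (n k) in
def includeSupported :
    InvAlg n k ⊗[ℂ] supported ℂ (rightColumns n k) →ₐ[ℂ] InvAlg n k ⊗[ℂ] P n k :=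
  Algebra.TensorProduct.map (AlgHom.id ℂ _) (supported ℂ (rightColumns n k)).val

theorem includeSupported_tmul (a : InvAlg n k) (p : supported ℂ (rightColumns n k)) :
    includeSupported n k (a ⊗ₜ p) = a ⊗ₜ (p : P n k) :=
  Algebra.TensorProduct.map_tmul _ _ _ _

theorem includeSupported_mem_range_incl (h : n + 2 ≤ 2 * k)
    (y : InvAlg n k ⊗[ℂ] supported ℂ (rightColumns n k)) :
    includeSupported n k y ∈ LinearMap.range (incl n k) := by
  induction y using TensorProduct.induction_on with
  | zero => exact ⟨0, by simp⟩
  | tmul a p =>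
    exact ⟨a ⊗ₜ ⟨p, supported_rightColumns_le_harm h p.2⟩, (includeSupported_tmul a p).symm⟩
  | add y y' hy hy' => rw [map_add]; exact add_mem hy hy'

theorem exists_includeSupported_eq_Mt_minor_entry (hk : 0 < k) (r c : Fin (n + 1)) :
    ∃ y, includeSupported n k y =
      (Mt n k).submatrix finSumFinEquiv finSumFinEquiv (minorIdx hk r) (minorIdx hk c) := by
  have := r.isLt
  have := c.isLt
  rcases lt_or_ge r.val k with hr | hr <;> rcases lt_or_ge c.val k with hc | hc <;>
    simp only [minorIdx_of_lt, minorIdx_of_le, hr, hc, submatrix_apply, Mt,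
      Equiv.symm_apply_apply, fromBlocks_apply₁₁, fromBlocks_apply₁₂, fromBlocks_apply₂₁,
      fromBlocks_apply₂₂, of_apply]
  · exact ⟨rInv n k ⟨r, hr⟩ ⟨c, hc⟩ ⊗ₜ 1, includeSupported_tmul _ _⟩
  · refine ⟨1 ⊗ₜ ⟨X _, X_mem_supported.mpr ?_⟩, includeSupported_tmul _ _⟩
    simp only [rightColumns, Set.mem_ofPred_eq, Fin.val_rev]
    omega
  · refine ⟨1 ⊗ₜ ⟨X _, X_mem_supported.mpr ?_⟩, includeSupported_tmul _ _⟩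
    simp only [rightColumns, Set.mem_ofPred_eq, Fin.val_rev]
    omega
  · split_ifs
    · exact ⟨1, by rw [map_one, Algebra.TensorProduct.one_def]⟩
    · exact ⟨0, by simp⟩

theorem Dmin_zero_zero_mem_range_incl (hk : 0 < k) (h : n + 2 ≤ 2 * k) :
    Dmin n k 0 0 hk hk ∈ LinearMap.range (incl n k) := by
  obtain ⟨y, hy⟩ := exists_det_eq_of_forall_exists (includeSupported n k)
    (((Mt n k).submatrix _ _).submatrix (minorIdx hk) (minorIdx hk))
    (exists_includeSupported_eq_Mt_minor_entry hk)
  rw [Dmin_zero_zero_eq, ← hy]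
  exact includeSupported_mem_range_incl h y

theorem φ_eq_ψmul_incl (w : InvAlg n k ⊗[ℂ] Harm n k) : φ n k w = ψmul n k (incl n k w) := by
  induction w using TensorProduct.induction_on with
  | zero => simp
  | tmul a p => simp [φ, φF, incl, ψmul]
  | add w w' hw hw' => simp [hw, hw']

-- The `s = 2k - 1 - n` invariant rows `k - s, …, k - 1` of `M_{1,1}` meet no entry `1` of the
-- off-diagonal blocks at `antiDiagPoint`; `cornerPoint s` makes `revGram` the antidiagonal on them.
-- The weight `2⁻¹` offsets the two equal terms of `r_{k-1,k-1}` when `s = 1`.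
variable (n k) in
def cornerPoint (s : ℕ) : Matrix (Fin k) (Fin n) ℂ :=
  of fun i m =>
    if i.val = k - s ∧ m.val = 0 then 1
    else if i.val = k - 1 ∧ m.val = n - 1 then (if s = 1 then 2⁻¹ else 1) else 0

variable (n k) in
def antiDiagPoint : Matrix (Fin k) (Fin n) ℂ :=
  of fun i m => if i.val + m.val + 1 = n ∧ i.val + k ≤ n then 1 else 0

theorem revGram_cornerPoint {s : ℕ} (hs : s = 1 ∨ s = 2) (hsk : n + 1 + s = 2 * k)
    (hn : 2 ≤ n) :
    revGram (cornerPoint n k s) = of fun i j => if i.val + j.val = n then 1 else 0 := by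
  ext i j
  rw [revGram, of_apply, Fintype.sum_eq_add ⟨0, by omega⟩ ⟨n - 1, by omega⟩
    (fun h => by simp [Fin.ext_iff] at h; omega)]
  · rcases hs with rfl | rfl <;>
      simp only [cornerPoint, OfNat.ofNat_ne_one, ↓reduceIte, of_apply, and_true, Fin.val_rev,
        zero_add, mul_ite, mul_one, ite_mul, one_mul, zero_mul, mul_zero] <;>
      split_ifs <;> first | omega | norm_num
  · rintro m ⟨hm0, hm1⟩
    have := m.isLt
    simp only [ne_eq, Fin.ext_iff] at hm0 hm1
    simp only [cornerPoint, of_apply, Fin.val_rev]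
    split_ifs <;> first | omega | simp

def boundaryInvolution (hn : n < 2 * k) : Equiv.Perm (Fin (n + 1)) :=
  Function.Involutive.toPerm
    (fun r => ⟨if r.val + k ≤ n then r + k else if r.val < k then n - r else r - k,
      by have := r.isLt; split_ifs <;> omega⟩)
    (fun r => by have := r.isLt; ext; simp only; split_ifs <;> omega)

theorem boundaryInvolution_apply_val (hn : n < 2 * k) (r : Fin (n + 1)) :
    (boundaryInvolution hn r : ℕ) =
      if r.val + k ≤ n then r + k else if r.val < k then n - r else r - k :=
  rfl

theorem submatrix_blockMatrix_eq_permMatrix (hk : 0 < k) (hn : n + 2 ≤ 2 * k) :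
    (blockMatrix (of fun i j : Fin k => if i.val + j.val = n then (1 : ℂ) else 0)
      (antiDiagPoint n k)).submatrix (minorIdx hk) (minorIdx hk) =
      (boundaryInvolution (by omega : n < 2 * k)).permMatrix ℂ := by
  ext r c
  have := r.isLt
  have := c.isLt
  rcases lt_or_ge r.val k with hr | hr <;> rcases lt_or_ge c.val k with hc | hc <;>
    simp only [minorIdx_of_lt, minorIdx_of_le, hr, hc, submatrix_apply, blockMatrix,
      fromBlocks_apply₁₁, fromBlocks_apply₁₂, fromBlocks_apply₂₁, fromBlocks_apply₂₂, of_apply,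
      antiDiagPoint, PEquiv.toMatrix_apply, Equiv.toPEquiv_apply, Option.mem_def,
      Option.some_inj, Fin.ext_iff, boundaryInvolution_apply_val,
      Fin.val_rev] <;>
    split_ifs <;> first | rfl | omega

theorem Dmin_zero_zero_ne_zero (hk : 0 < k) {s : ℕ} (hs : s = 1 ∨ s = 2)
    (hsk : n + 1 + s = 2 * k) (hn : 2 ≤ n) : Dmin n k 0 0 hk hk ≠ 0 := by
  intro hD
  have hχ := map_Dmin_zero_zero hk (aeval (Function.uncurry (cornerPoint n k s)))
    (aeval (Function.uncurry (antiDiagPoint n k)))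
  rw [hD, map_zero, genericMatrix_map_aeval, genericMatrix_map_aeval,
    revGram_cornerPoint hs hsk hn, submatrix_blockMatrix_eq_permMatrix hk (by omega),
    det_permutation] at hχ
  exact Int.cast_ne_zero.mpr (Units.ne_zero _) hχ.symm

end HoweDuality

/-- in the boundary non-stable cases n = 2k-2 (k ≥ 2) and n = 2k-3 (k ≥ 3),
D_{1,1} = det M̃_{1,1} lies in 𝓘 ⊗ 𝓗, is nonzero and satisfies ψ(D_{1,1}) = 0;
consequently Ker φ^{(n,k)} ≠ 0. -/
theorem boundary_nonstable_kernel_nonzero (n k : ℕ)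
    (hcase : (n + 2 = 2 * k ∧ 2 ≤ k) ∨ (n + 3 = 2 * k ∧ 3 ≤ k))
    (hk : 0 < k) :
    Dmin n k 0 0 hk hk ≠ 0 ∧
    ψmul n k (Dmin n k 0 0 hk hk) = 0 ∧
    (∃ w : (InvAlg n k) ⊗[ℂ] (Harm n k),
      incl n k w = Dmin n k 0 0 hk hk ∧ w ≠ 0 ∧ φ n k w = 0) ∧
    LinearMap.ker (φ n k) ≠ ⊥ := by
  obtain ⟨s, hs, hsk, hn⟩ : ∃ s, (s = 1 ∨ s = 2) ∧ n + 1 + s = 2 * k ∧ 2 ≤ n := by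
    rcases hcase with ⟨h, h'⟩ | ⟨h, h'⟩
    · exact ⟨1, .inl rfl, by omega, by omega⟩
    · exact ⟨2, .inr rfl, by omega, by omega⟩
  have hD := HoweDuality.Dmin_zero_zero_ne_zero hk hs hsk hn
  have hψ : ψmul n k (Dmin n k 0 0 hk hk) = 0 := HoweDuality.ψmul_Dmin_zero_zero_eq_zero hk
  obtain ⟨w, hw⟩ := HoweDuality.Dmin_zero_zero_mem_range_incl hk (n := n) (by omega)
  have hw0 : w ≠ 0 := by
    rintro rfl
    exact hD (by rw [← hw, map_zero])
  have hφ : φ n k w = 0 := by rw [HoweDuality.φ_eq_ψmul_incl, hw, hψ]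
  exact ⟨hD, hψ, ⟨w, hw, hw0, hφ⟩, fun hbot => hw0 (LinearMap.ker_eq_bot'.mp hbot w hφ)⟩
end
end

section
/- Let n = 1 and k ≥ 2. Then the variables x_{11} and x_{21} are harmonic, the polynomials r_{11} = x_{11}² and r_{12} = x_{11}·x_{21} lie in 𝓘, and the element r_{11} ⊗ x_{21} − r_{12} ⊗ x_{11} of 𝓘 ⊗_ℂ 𝓗 is nonzero and satisfies φ^{(1,k)}(r_{11} ⊗ x_{21} − r_{12} ⊗ x_{11}) = 0; hence φ^{(1,k)} is not injective for k ≥ 2. -/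
open MvPolynomial TensorProduct

set_option synthInstance.maxHeartbeats 1000000
set_option maxHeartbeats 1000000

noncomputable section

/-- auxiliary: every variable is harmonic when n = 1 -/
lemma X_mem_Harm_one (k : ℕ) (s : Fin k × Fin 1) : X s ∈ Harm 1 k := by
  simp only [Harm, Submodule.mem_iInf, LinearMap.mem_ker, Δop, Fin.sum_univ_one]
  intro i j
  simp [pderiv_X, Pi.single_apply]
  split <;> simp

/-- auxiliary: rpoly for n = 1 -/
lemma rpoly_one_eq (k : ℕ) (i j : Fin k) : rpoly 1 k i j = X (i, 0) * X (j, 0) := by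
  simp [rpoly, Fin.sum_univ_one]

lemma φ_tmul (n k : ℕ) (a : InvAlg n k) (h : Harm n k) :
    φ n k (a ⊗ₜ h) = a.val * h.val := rfl

/-- auxiliary pairing functional on the tensor product -/
def Lfun (k : ℕ) (v w : Fin k × Fin 1 → ℂ) : (InvAlg 1 k) ⊗[ℂ] (Harm 1 k) →ₗ[ℂ] ℂ :=
  TensorProduct.lift ((LinearMap.mul ℂ ℂ).compl₁₂
    ((aeval v).toLinearMap ∘ₗ (InvAlg 1 k).val.toLinearMap)
    ((aeval w).toLinearMap ∘ₗ (Harm 1 k).subtype))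

lemma Lfun_tmul (k : ℕ) (v w : Fin k × Fin 1 → ℂ) (a : InvAlg 1 k) (h : Harm 1 k) :
    Lfun k v w (a ⊗ₜ h) = aeval v a.val * aeval w h.val := rfl

/-- for n = 1 and k ≥ 2 the variables x_{11}, x_{21} are harmonic,
r_{11} = x_{11}², r_{12} = x_{11}·x_{21} are invariants, and
r_{11} ⊗ x_{21} - r_{12} ⊗ x_{11} is a nonzero element of Ker φ^{(1,k)};
hence φ^{(1,k)} is not injective. -/
theorem phi_not_injective_dim_one (k : ℕ) (hk : 2 ≤ k) :
    (X ((⟨0, by omega⟩ : Fin k), 0) ∈ Harm 1 k) ∧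
    (X ((⟨1, by omega⟩ : Fin k), 0) ∈ Harm 1 k) ∧
    rpoly 1 k ⟨0, by omega⟩ ⟨0, by omega⟩ =
      X ((⟨0, by omega⟩ : Fin k), 0) * X ((⟨0, by omega⟩ : Fin k), 0) ∧
    rpoly 1 k ⟨0, by omega⟩ ⟨1, by omega⟩ =
      X ((⟨0, by omega⟩ : Fin k), 0) * X ((⟨1, by omega⟩ : Fin k), 0) ∧
    (rpoly 1 k ⟨0, by omega⟩ ⟨0, by omega⟩ ∈ InvAlg 1 k) ∧
    (rpoly 1 k ⟨0, by omega⟩ ⟨1, by omega⟩ ∈ InvAlg 1 k) ∧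
    (∀ (h0 : X ((⟨0, by omega⟩ : Fin k), 0) ∈ Harm 1 k)
        (h1 : X ((⟨1, by omega⟩ : Fin k), 0) ∈ Harm 1 k),
      let u : (InvAlg 1 k) ⊗[ℂ] (Harm 1 k) :=
        (rInv 1 k ⟨0, by omega⟩ ⟨0, by omega⟩) ⊗ₜ[ℂ]
            (⟨X ((⟨1, by omega⟩ : Fin k), 0), h1⟩ : Harm 1 k) -
          (rInv 1 k ⟨0, by omega⟩ ⟨1, by omega⟩) ⊗ₜ[ℂ]
            (⟨X ((⟨0, by omega⟩ : Fin k), 0), h0⟩ : Harm 1 k)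
      u ≠ 0 ∧ φ 1 k u = 0) ∧
    ¬ Function.Injective (φ 1 k) := by
  have key : ∀ (h0 : X ((⟨0, by omega⟩ : Fin k), 0) ∈ Harm 1 k)
      (h1 : X ((⟨1, by omega⟩ : Fin k), 0) ∈ Harm 1 k),
      let u : (InvAlg 1 k) ⊗[ℂ] (Harm 1 k) :=
        (rInv 1 k ⟨0, by omega⟩ ⟨0, by omega⟩) ⊗ₜ[ℂ]
            (⟨X ((⟨1, by omega⟩ : Fin k), 0), h1⟩ : Harm 1 k) -
          (rInv 1 k ⟨0, by omega⟩ ⟨1, by omega⟩) ⊗ₜ[ℂ]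
            (⟨X ((⟨0, by omega⟩ : Fin k), 0), h0⟩ : Harm 1 k)
      u ≠ 0 ∧ φ 1 k u = 0 := by
    intro h0 h1 u
    have hφu : φ 1 k u = 0 := by
      show φ 1 k (_ - _) = 0
      rw [map_sub, φ_tmul, φ_tmul]
      show rpoly 1 k _ _ * X _ - rpoly 1 k _ _ * X _ = 0
      rw [rpoly_one_eq, rpoly_one_eq]
      ring
    refine ⟨?_, hφu⟩
    intro hu
    -- evaluate the pairing: v sends x_{0,0} ↦ 1, others ↦ 0; w sends all ↦ 1
    set v : Fin k × Fin 1 → ℂ := fun p => if p.1 = (⟨0, by omega⟩ : Fin k) then 1 else 0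
    set w : Fin k × Fin 1 → ℂ := fun _ => 1
    have h10 : ((⟨1, by omega⟩ : Fin k)) ≠ (⟨0, by omega⟩ : Fin k) := by
      simp [Fin.ext_iff]
    have hL : Lfun k v w u = 1 := by
      show Lfun k v w (_ - _) = 1
      rw [map_sub, Lfun_tmul, Lfun_tmul]
      show aeval v (rpoly 1 k _ _) * aeval w (X _) -
        aeval v (rpoly 1 k _ _) * aeval w (X _) = 1
      rw [rpoly_one_eq, rpoly_one_eq]
      simp [v, w, h10]
    rw [hu, map_zero] at hL
    exact zero_ne_one hL
  refine ⟨X_mem_Harm_one k _, X_mem_Harm_one k _, rpoly_one_eq k _ _, rpoly_one_eq k _ _,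
    (rInv 1 k _ _).2, (rInv 1 k _ _).2, key, ?_⟩
  intro hinj
  obtain ⟨hne, hzero⟩ := key (X_mem_Harm_one k _) (X_mem_Harm_one k _)
  exact hne (hinj (by rw [hzero, map_zero]))
end
end

section
/- Let n = 2 and k = 3. For every integer d ≥ 0, the ℂ-dimension of the space of homogeneous polynomials of total degree 2d lying in 𝓘(M_{3×2}) equals C(d+4, 4) + C(d+3, 4) + C(d+2, 4), where C(a, b) denotes the binomial coefficient (equal to 0 when a < b). Equivalently, the Hilbert series of 𝓘(M_{3×2}), graded so that each r_{ij} has degree one, is (1 + q + q²)/(1 − q)⁵. -/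
open MvPolynomial TensorProduct

set_option synthInstance.maxHeartbeats 1000000
set_option maxHeartbeats 1000000

noncomputable section

namespace HilbertAux

def mexp (α β : Fin 3 → ℕ) : Fin 3 × Fin 2 →₀ ℕ :=
  Finsupp.equivFunOnFinite.symm fun p => if p.2 = 0 then α p.1 else β p.1

@[simp] lemma mexp_apply (α β : Fin 3 → ℕ) (p : Fin 3 × Fin 2) :
    mexp α β p = if p.2 = 0 then α p.1 else β p.1 := rfl

lemma mexp_add (α β γ δ : Fin 3 → ℕ) : mexp α β + mexp γ δ = mexp (α + γ) (β + δ) := by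
  ext p; by_cases h : p.2 = 0 <;> simp [h]

lemma mexp_inj {α β γ δ : Fin 3 → ℕ} (h : mexp α β = mexp γ δ) : α = γ ∧ β = δ := by
  constructor <;> funext t
  · have := DFunLike.congr_fun h (t, 0); simpa using this
  · have := DFunLike.congr_fun h (t, 1); simpa using this

def Smon (α β : Fin 3 → ℕ) : P 2 3 := monomial (mexp α β) 1 + monomial (mexp β α) 1

lemma Smon_comm (α β : Fin 3 → ℕ) : Smon α β = Smon β α := add_comm _ _

lemma Smon_mul (α β γ δ : Fin 3 → ℕ) :
    Smon α β * Smon γ δ = Smon (α+γ) (β+δ) + Smon (α+δ) (β+γ) := by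
  simp only [Smon, add_mul, mul_add, monomial_mul, one_mul, mexp_add]
  ring

def ind (i : Fin 3) : Fin 3 → ℕ := fun t => if t = i then 1 else 0

lemma sum_ind (i : Fin 3) : ∑ t, ind i t = 1 := by
  simp [ind]

lemma rpoly_eq (i j : Fin 3) : rpoly 2 3 i j = Smon (ind i) (ind j) := by
  rw [rpoly, Fin.sum_univ_two]
  have h0 : (0 : Fin 2).rev = 1 := rfl
  have h1 : (1 : Fin 2).rev = 0 := rfl
  rw [h0, h1]
  have hX : ∀ (u v : Fin 3 × Fin 2), (X u * X v : P 2 3) =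
      monomial (Finsupp.single u 1 + Finsupp.single v 1) 1 := by
    intro u v
    rw [X, X, monomial_mul, one_mul]
  rw [hX, hX]
  have e1 : Finsupp.single ((i,0) : Fin 3 × Fin 2) 1 + Finsupp.single (j,1) 1
      = mexp (ind i) (ind j) := by
    ext p
    rcases p with ⟨t, m⟩
    fin_cases m <;>
      simp [Finsupp.single_apply, ind, Prod.ext_iff, eq_comm]
  have e2 : Finsupp.single ((i,1) : Fin 3 × Fin 2) 1 + Finsupp.single (j,0) 1
      = mexp (ind j) (ind i) := by
    ext p
    rcases p with ⟨t, m⟩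
    fin_cases m <;>
      simp [Finsupp.single_apply, ind, Prod.ext_iff, eq_comm]
  rw [e1, e2]
  rfl

lemma rpoly_mem (i j : Fin 3) : rpoly 2 3 i j ∈ InvAlg 2 3 :=
  Algebra.subset_adjoin ⟨(i, j), rfl⟩

lemma sub_ind_add {α : Fin 3 → ℕ} {i : Fin 3} (h : 0 < α i) :
    (fun t => α t - ind i t) + ind i = α := by
  funext t
  by_cases ht : t = i <;> simp [ind, ht] <;> omega

lemma sum_sub_ind {α : Fin 3 → ℕ} {i : Fin 3} (h : 0 < α i) {d : ℕ}
    (hs : ∑ t, α t = d + 1) : ∑ t, (α t - ind i t) = d := by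
  have h2 : ∑ t, ((fun t => α t - ind i t) + ind i) t = d + 1 := by
    rw [sub_ind_add h]; exact hs
  simp only [Pi.add_apply, Finset.sum_add_distrib, sum_ind] at h2
  omega

/-- shared-index reduction -/
lemma L1 (e : ℕ)
    (IH : ∀ α β : Fin 3 → ℕ, (∑ t, α t) = e → (∑ t, β t) = e → Smon α β ∈ InvAlg 2 3)
    (α β : Fin 3 → ℕ) (i : Fin 3) (hai : 0 < α i) (hbi : 0 < β i)
    (hα : ∑ t, α t = e + 1) (hβ : ∑ t, β t = e + 1) : Smon α β ∈ InvAlg 2 3 := by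
  set α' : Fin 3 → ℕ := fun t => α t - ind i t with hα'def
  set β' : Fin 3 → ℕ := fun t => β t - ind i t with hβ'def
  have hA : α' + ind i = α := sub_ind_add hai
  have hB : β' + ind i = β := sub_ind_add hbi
  have key : rpoly 2 3 i i * Smon α' β' = Smon α β + Smon α β := by
    rw [rpoly_eq, Smon_mul, add_comm (ind i) α', add_comm (ind i) β', hA, hB,
      Smon_comm β α]
  have hmem : rpoly 2 3 i i * Smon α' β' ∈ InvAlg 2 3 :=
    mul_mem (rpoly_mem i i) (IH α' β' (sum_sub_ind hai hα) (sum_sub_ind hbi hβ))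
  have : Smon α β = (2 : ℂ)⁻¹ • (rpoly 2 3 i i * Smon α' β') := by
    rw [key, ← two_smul ℂ (Smon α β), inv_smul_smul₀ two_ne_zero]
  rw [this]
  exact Subalgebra.smul_mem _ hmem _

lemma exists_pos {α : Fin 3 → ℕ} {e : ℕ} (h : ∑ t, α t = e + 1) : ∃ i, 0 < α i := by
  by_contra hc
  push_neg at hc
  have : ∑ t, α t = 0 := Finset.sum_eq_zero fun t _ => by have := hc t; omega
  omega

lemma Smon_mem_inv : ∀ (d : ℕ) (α β : Fin 3 → ℕ),
    (∑ t, α t) = d → (∑ t, β t) = d → Smon α β ∈ InvAlg 2 3 := by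
  intro d
  induction d with
  | zero =>
    intro α β hα hβ
    have hα0 : α = fun _ => 0 := by
      have hz := Finset.sum_eq_zero_iff.mp hα
      funext t; exact hz t (Finset.mem_univ t)
    have hβ0 : β = fun _ => 0 := by
      have hz := Finset.sum_eq_zero_iff.mp hβ
      funext t; exact hz t (Finset.mem_univ t)
    subst hα0 hβ0
    have : Smon (fun _ => 0) (fun _ => 0) = (2 : P 2 3) := by
      have h0 : mexp (fun _ => 0) (fun _ => 0) = 0 := by
        ext p; simp [mexp]
      simp [Smon, h0, monomial_zero']
      ring
    have h2 : (2 : P 2 3) = algebraMap ℂ (P 2 3) 2 := (map_ofNat _ 2).symm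
    rw [this, h2]
    exact Subalgebra.algebraMap_mem _ 2
  | succ e IH =>
    intro α β hα hβ
    by_cases hsh : ∃ i, 0 < α i ∧ 0 < β i
    · obtain ⟨i, h1, h2⟩ := hsh
      exact L1 e IH α β i h1 h2 hα hβ
    · push_neg at hsh
      obtain ⟨i0, hi0⟩ := exists_pos hα
      obtain ⟨j0, hj0⟩ := exists_pos hβ
      rcases e with _ | f
      · -- degree 1 : α = ind i0, β = ind j0
        have hαe : α = ind i0 := by
          funext t
          rw [Fin.sum_univ_three] at hα
          fin_cases t <;> fin_cases i0 <;> simp_all [ind] <;> omega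
        have hβe : β = ind j0 := by
          funext t
          rw [Fin.sum_univ_three] at hβ
          fin_cases t <;> fin_cases j0 <;> simp_all [ind] <;> omega
        rw [hαe, hβe, ← rpoly_eq]
        exact rpoly_mem i0 j0
      · -- degree ≥ 2 : pick smart i j
        have hchoice : ∃ i j, 0 < α i ∧ 0 < β j ∧ (2 ≤ α i ∨ 2 ≤ β j) := by
          by_cases h2 : ∃ i, 2 ≤ α i
          · obtain ⟨i, hi⟩ := h2
            exact ⟨i, j0, by omega, hj0, Or.inl hi⟩
          · push_neg at h2
            have hbj : ∃ j, 2 ≤ β j := by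
              by_contra hc
              push_neg at hc
              rw [Fin.sum_univ_three] at hα hβ
              have d0 := hsh 0; have d1 := hsh 1; have d2 := hsh 2
              have a0 := h2 0; have a1 := h2 1; have a2 := h2 2
              have b0 := hc 0; have b1 := hc 1; have b2 := hc 2
              omega
            obtain ⟨j, hj⟩ := hbj
            exact ⟨i0, j, hi0, by omega, Or.inr hj⟩
        obtain ⟨i, j, hai, hbj, hbig⟩ := hchoice
        have hij : i ≠ j := by
          intro hEq
          exact absurd hbj (by have := hsh i; subst hEq; omega)
        set α' : Fin 3 → ℕ := fun t => α t - ind i t with hα'def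
        set β' : Fin 3 → ℕ := fun t => β t - ind j t with hβ'def
        have hA : α' + ind i = α := sub_ind_add hai
        have hB : β' + ind j = β := sub_ind_add hbj
        have hsA : ∑ t, α' t = f + 1 := sum_sub_ind hai hα
        have hsB : ∑ t, β' t = f + 1 := sum_sub_ind hbj hβ
        have key : rpoly 2 3 i j * Smon α' β'
            = Smon α β + Smon (α' + ind j) (β' + ind i) := by
          rw [rpoly_eq, Smon_mul, add_comm (ind i) α', add_comm (ind j) β', hA, hB,
            add_comm (ind i) β', add_comm (ind j) α', Smon_comm (β' + ind i)]
        have hsA2 : ∑ t, (α' + ind j) t = f + 1 + 1 := by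
          simp only [Pi.add_apply, Finset.sum_add_distrib, sum_ind, hsA]
        have hsB2 : ∑ t, (β' + ind i) t = f + 1 + 1 := by
          simp only [Pi.add_apply, Finset.sum_add_distrib, sum_ind, hsB]
        have m2 : Smon (α' + ind j) (β' + ind i) ∈ InvAlg 2 3 := by
          have vA_i : (α' + ind j) i = α i - 1 := by
            simp only [Pi.add_apply, hα'def, ind, if_pos rfl, if_neg hij, if_true]
            omega
          have vA_j : (α' + ind j) j = α j + 1 := by
            simp only [Pi.add_apply, hα'def, ind, if_pos rfl, if_neg (Ne.symm hij), if_true]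
            omega
          have vB_i : (β' + ind i) i = β i + 1 := by
            simp only [Pi.add_apply, hβ'def, ind, if_pos rfl, if_neg hij, if_true]
            omega
          have vB_j : (β' + ind i) j = β j - 1 := by
            simp only [Pi.add_apply, hβ'def, ind, if_pos rfl, if_neg (Ne.symm hij), if_true]
            omega
          rcases hbig with hcase | hcase
          · -- shared index i
            exact L1 (f+1) IH (α' + ind j) (β' + ind i) i
              (by rw [vA_i]; omega) (by rw [vB_i]; omega) hsA2 hsB2
          · -- shared index j
            exact L1 (f+1) IH (α' + ind j) (β' + ind i) j
              (by rw [vA_j]; omega) (by rw [vB_j]; omega) hsA2 hsB2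
        have m1 : rpoly 2 3 i j * Smon α' β' ∈ InvAlg 2 3 :=
          mul_mem (rpoly_mem i j) (IH α' β' hsA hsB)
        have : Smon α β = rpoly 2 3 i j * Smon α' β' - Smon (α' + ind j) (β' + ind i) := by
          rw [key]; ring
        rw [this]
        exact sub_mem m1 m2

def genSet (d : ℕ) : Set (P 2 3) :=
  {p | ∃ α β : Fin 3 → ℕ, (∑ t, α t) = d ∧ (∑ t, β t) = d ∧ p = Smon α β}

def Vd (d : ℕ) : Submodule ℂ (P 2 3) := Submodule.span ℂ (genSet d)

lemma mexp_degree (α β : Fin 3 → ℕ) :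
    (mexp α β).degree = (∑ t, α t) + (∑ t, β t) := by
  have h1 : (mexp α β).degree = ∑ p : Fin 3 × Fin 2, mexp α β p := by
    rw [Finsupp.degree]
    exact Finset.sum_subset (Finset.subset_univ _)
      (fun x _ hx => by rwa [Finsupp.notMem_support_iff] at hx)
  rw [h1, Fintype.sum_prod_type]
  have h2 : ∀ t : Fin 3, (∑ m : Fin 2, mexp α β (t, m)) = α t + β t := by
    intro t; rw [Fin.sum_univ_two]; simp
  simp_rw [h2]
  rw [Finset.sum_add_distrib]

lemma Smon_mem_homog (d : ℕ) (α β : Fin 3 → ℕ) (hα : (∑ t, α t) = d)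
    (hβ : (∑ t, β t) = d) :
    Smon α β ∈ homogeneousSubmodule (Fin 3 × Fin 2) ℂ (2 * d) := by
  refine Submodule.add_mem _ ?_ ?_ <;>
    [skip; skip] <;>
    · rw [mem_homogeneousSubmodule]
      exact isHomogeneous_monomial _ (by rw [mexp_degree]; omega)

lemma Vd_le_inv (d : ℕ) : Vd d ≤ Subalgebra.toSubmodule (InvAlg 2 3) := by
  rw [Vd, Submodule.span_le]
  rintro p ⟨α, β, hα, hβ, rfl⟩
  exact Smon_mem_inv d α β hα hβ

lemma Vd_le_homog (d : ℕ) : Vd d ≤ homogeneousSubmodule (Fin 3 × Fin 2) ℂ (2 * d) := by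
  rw [Vd, Submodule.span_le]
  rintro p ⟨α, β, hα, hβ, rfl⟩
  exact Smon_mem_homog d α β hα hβ

lemma Vd_mul_Vd {e1 e2 : ℕ} {x y : P 2 3} (hx : x ∈ Vd e1) (hy : y ∈ Vd e2) :
    x * y ∈ Vd (e1 + e2) := by
  have h : Vd e1 * Vd e2 ≤ Vd (e1 + e2) := by
    rw [Vd, Vd, Submodule.span_mul_span, Submodule.span_le]
    rintro p ⟨u, ⟨α, β, hα, hβ, rfl⟩, v, ⟨γ, δ, hγ, hδ, rfl⟩, rfl⟩
    show Smon α β * Smon γ δ ∈ (Vd (e1 + e2) : Set (P 2 3))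
    rw [Smon_mul]
    refine Submodule.add_mem _ ?_ ?_ <;> apply Submodule.subset_span
    · exact ⟨α + γ, β + δ, by simp [Finset.sum_add_distrib, hα, hγ],
        by simp [Finset.sum_add_distrib, hβ, hδ], rfl⟩
    · exact ⟨α + δ, β + γ, by simp [Finset.sum_add_distrib, hα, hδ],
        by simp [Finset.sum_add_distrib, hβ, hγ], rfl⟩
  exact h (Submodule.mul_mem_mul hx hy)

lemma closure_mem_Vd {y : P 2 3}
    (hy : y ∈ Submonoid.closure (Set.range fun p : Fin 3 × Fin 3 => rpoly 2 3 p.1 p.2)) :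
    ∃ e, y ∈ Vd e := by
  induction hy using Submonoid.closure_induction with
  | mem x hx =>
    obtain ⟨⟨i, j⟩, rfl⟩ := hx
    refine ⟨1, Submodule.subset_span ⟨ind i, ind j, sum_ind i, sum_ind j, (rpoly_eq i j)⟩⟩
  | one =>
    refine ⟨0, ?_⟩
    have h1 : (1 : P 2 3) = (2 : ℂ)⁻¹ • Smon (fun _ => 0) (fun _ => 0) := by
      have h0 : mexp (fun _ => 0) (fun _ => 0) = 0 := by ext p; simp
      rw [Smon, h0, monomial_zero', C_1]
      rw [← two_smul ℂ (1 : P 2 3), inv_smul_smul₀ two_ne_zero]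
    rw [h1]
    exact Submodule.smul_mem _ _ (Submodule.subset_span ⟨_, _, by simp, by simp, rfl⟩)
  | mul x y hx hy ihx ihy =>
    obtain ⟨e1, h1⟩ := ihx
    obtain ⟨e2, h2⟩ := ihy
    exact ⟨e1 + e2, Vd_mul_Vd h1 h2⟩

lemma inv_inf_homog_le_Vd (d : ℕ) :
    Subalgebra.toSubmodule (InvAlg 2 3) ⊓ homogeneousSubmodule (Fin 3 × Fin 2) ℂ (2 * d)
      ≤ Vd d := by
  rintro x ⟨hx1, hx2⟩
  have hx1' : x ∈ Submodule.span ℂ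
      ((Submonoid.closure (Set.range fun p : Fin 3 × Fin 3 => rpoly 2 3 p.1 p.2)) :
        Set (P 2 3)) := by
    have := Algebra.adjoin_eq_span (R := ℂ)
      (s := (Set.range fun p : Fin 3 × Fin 3 => rpoly 2 3 p.1 p.2))
    rw [InvAlg] at hx1
    rw [← this]
    exact hx1
  have hcomp : homogeneousComponent (2 * d) x = x := by
    rw [homogeneousComponent_of_mem hx2, if_pos rfl]
  have key : ∀ (y : P 2 3), y ∈ Submodule.span ℂ
      ((Submonoid.closure (Set.range fun p : Fin 3 × Fin 3 => rpoly 2 3 p.1 p.2)) :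
        Set (P 2 3)) → homogeneousComponent (2 * d) y ∈ Vd d := by
    intro y hy
    induction hy using Submodule.span_induction with
    | mem y hgen =>
      obtain ⟨e, he⟩ := closure_mem_Vd hgen
      have hhom : y ∈ homogeneousSubmodule (Fin 3 × Fin 2) ℂ (2 * e) := Vd_le_homog e he
      rw [homogeneousComponent_of_mem hhom]
      by_cases hde : 2 * d = 2 * e
      · have : d = e := by omega
        subst this
        rw [if_pos rfl]; exact he
      · rw [if_neg hde]; exact Submodule.zero_mem _
    | zero => rw [map_zero]; exact Submodule.zero_mem _
    | add a b _ _ iha ihb => rw [map_add]; exact Submodule.add_mem _ iha ihb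
    | smul c a _ iha => rw [map_smul]; exact Submodule.smul_mem _ _ iha
  have := key x hx1'
  rwa [hcomp] at this

lemma inv_inf_homog_eq_Vd (d : ℕ) :
    Subalgebra.toSubmodule (InvAlg 2 3) ⊓ homogeneousSubmodule (Fin 3 × Fin 2) ℂ (2 * d)
      = Vd d :=
  le_antisymm (inv_inf_homog_le_Vd d) (le_inf (Vd_le_inv d) (Vd_le_homog d))

/-- counts of a multiset -/
def cnt {d : ℕ} (s : Sym (Fin 3) d) : Fin 3 → ℕ := fun t => Multiset.count t (s : Multiset (Fin 3))

lemma cnt_sum {d : ℕ} (s : Sym (Fin 3) d) : ∑ t, cnt s t = d := by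
  have h1 : ∑ t ∈ (s : Multiset (Fin 3)).toFinset, Multiset.count t (s : Multiset (Fin 3))
      = Multiset.card (s : Multiset (Fin 3)) := Multiset.toFinset_sum_count_eq _
  have h2 : ∑ t ∈ (s : Multiset (Fin 3)).toFinset, Multiset.count t (s : Multiset (Fin 3))
      = ∑ t, cnt s t := by
    refine Finset.sum_subset (Finset.subset_univ _) (fun x _ hx => ?_)
    exact Multiset.count_eq_zero_of_notMem (fun hmem => hx (Multiset.mem_toFinset.mpr hmem))
  rw [← h2, h1]
  exact s.2

lemma cnt_inj {d : ℕ} : Function.Injective (cnt (d := d)) := by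
  intro s t h
  apply Subtype.ext
  apply Multiset.ext.mpr
  intro a
  exact congrFun h a

lemma cnt_surj {d : ℕ} (α : Fin 3 → ℕ) (hα : ∑ t, α t = d) : ∃ s : Sym (Fin 3) d, cnt s = α := by
  set f : Fin 3 →₀ ℕ := Finsupp.equivFunOnFinite.symm α with hf
  have hcard : Multiset.card f.toMultiset = d := by
    rw [Finsupp.card_toMultiset, Finsupp.sum_fintype _ _ (fun _ => rfl)]
    exact hα
  refine ⟨⟨f.toMultiset, hcard⟩, ?_⟩
  funext t
  show Multiset.count t f.toMultiset = α t
  rw [Finsupp.count_toMultiset]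
  rfl

/-- the basis family indexed by unordered pairs of multisets -/
def bFam (d : ℕ) : Sym2 (Sym (Fin 3) d) → P 2 3 :=
  Sym2.lift ⟨fun s t => Smon (cnt s) (cnt t), fun s t => Smon_comm _ _⟩

lemma bFam_mk {d : ℕ} (s t : Sym (Fin 3) d) : bFam d s(s, t) = Smon (cnt s) (cnt t) := rfl

lemma span_bFam (d : ℕ) : Submodule.span ℂ (Set.range (bFam d)) = Vd d := by
  apply le_antisymm
  · rw [Submodule.span_le]
    rintro p ⟨q, rfl⟩
    induction q using Sym2.ind with
    | _ s t =>
      exact Submodule.subset_span ⟨cnt s, cnt t, cnt_sum s, cnt_sum t, rfl⟩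
  · rw [Vd, Submodule.span_le]
    rintro p ⟨α, β, hα, hβ, rfl⟩
    obtain ⟨s, rfl⟩ := cnt_surj α hα
    obtain ⟨t, rfl⟩ := cnt_surj β hβ
    exact Submodule.subset_span ⟨s(s, t), rfl⟩

lemma bFam_linearIndependent (d : ℕ) : LinearIndependent ℂ (bFam d) := by
  rw [Fintype.linearIndependent_iff]
  intro g hg q
  induction q using Sym2.ind with
  | _ s t =>
    have hco := congrArg (coeff (mexp (cnt s) (cnt t))) hg
    rw [coeff_sum, coeff_zero] at hco
    rw [Finset.sum_eq_single (s(s, t) : Sym2 (Sym (Fin 3) d))] at hco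
    · rw [coeff_smul, bFam_mk] at hco
      rw [Smon, coeff_add, coeff_monomial, coeff_monomial, if_pos rfl, smul_eq_mul] at hco
      by_cases hst : mexp (cnt t) (cnt s) = mexp (cnt s) (cnt t)
      · rw [if_pos hst] at hco
        have h2 : (1 + 1 : ℂ) ≠ 0 := by norm_num
        exact (mul_eq_zero.mp hco).resolve_right h2
      · rw [if_neg hst] at hco
        have h2 : (1 + 0 : ℂ) ≠ 0 := by norm_num
        exact (mul_eq_zero.mp hco).resolve_right h2
    · intro b _ hb
      induction b using Sym2.ind with
      | _ u v =>
        rw [coeff_smul, bFam_mk, Smon, coeff_add, coeff_monomial, coeff_monomial]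
        have h1 : ¬(mexp (cnt u) (cnt v) = mexp (cnt s) (cnt t)) := by
          intro h
          obtain ⟨h1, h2⟩ := mexp_inj h
          exact hb (by rw [cnt_inj h1, cnt_inj h2])
        have h2 : ¬(mexp (cnt v) (cnt u) = mexp (cnt s) (cnt t)) := by
          intro h
          obtain ⟨h1, h2⟩ := mexp_inj h
          rw [cnt_inj h1, cnt_inj h2] at hb
          exact hb (Sym2.eq_swap)
        rw [if_neg h1, if_neg h2, add_zero, smul_zero]
    · intro h
      exact absurd (Finset.mem_univ _) h

lemma finrank_Vd (d : ℕ) :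
    Module.finrank ℂ (Vd d) = Fintype.card (Sym2 (Sym (Fin 3) d)) := by
  rw [← span_bFam]
  exact finrank_span_eq_card (bFam_linearIndependent d)

lemma card_sym2_sym (d : ℕ) :
    Fintype.card (Sym2 (Sym (Fin 3) d)) = ((d + 2).choose 2 + 1).choose 2 := by
  rw [Sym2.card, Sym.card_sym_eq_choose, Fintype.card_fin]
  have h2 : 3 + d - 1 = d + 2 := by omega
  rw [h2]
  have h3 : (d + 2).choose d = (d + 2).choose 2 := by
    have h := Nat.choose_symm (show 2 ≤ d + 2 by omega)
    rw [Nat.add_sub_cancel] at h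
    exact h
  rw [h3]

lemma h2c : ∀ n : ℕ, 2 * (n + 1).choose 2 = n * (n + 1) := by
  intro n
  induction n with
  | zero => decide
  | succ m ih =>
    have hp : (m + 2).choose 2 = (m + 1).choose 1 + (m + 1).choose 2 := Nat.choose_succ_succ _ _
    rw [hp, Nat.choose_one_right, Nat.mul_add, ih]
    ring

lemma h3c : ∀ n : ℕ, 6 * (n + 2).choose 3 = n * (n + 1) * (n + 2) := by
  intro n
  induction n with
  | zero => decide
  | succ m ih =>
    have hp : (m + 3).choose 3 = (m + 2).choose 2 + (m + 2).choose 3 := Nat.choose_succ_succ _ _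
    rw [hp, Nat.mul_add, ih]
    have h := h2c (m + 1)
    have : (6 : ℕ) * (m + 2).choose 2 = 3 * (2 * (m + 2).choose 2) := by ring
    rw [this, h]
    ring
lemma h4c : ∀ n : ℕ, 24 * (n + 3).choose 4 = n * (n + 1) * (n + 2) * (n + 3) := by
  intro n
  induction n with
  | zero => decide
  | succ m ih =>
    have hp : (m + 4).choose 4 = (m + 3).choose 3 + (m + 3).choose 4 := Nat.choose_succ_succ _ _
    rw [hp, Nat.mul_add, ih]
    have h := h3c (m + 1)
    have : (24 : ℕ) * (m + 3).choose 3 = 4 * (6 * (m + 3).choose 3) := by ring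
    rw [this, h]
    ring

lemma arith_main (d : ℕ) :
    ((d + 2).choose 2 + 1).choose 2
      = (d + 4).choose 4 + (d + 3).choose 4 + (d + 2).choose 4 := by
  rcases d with _ | e
  · decide
  · -- d = e + 1
    have hm : 2 * ((e + 3).choose 2) = (e + 2) * (e + 3) := h2c (e + 2)
    set m := (e + 3).choose 2 with hmdef
    apply Nat.eq_of_mul_eq_mul_left (show 0 < 48 by norm_num)
    have l1 : 48 * ((m + 1).choose 2) = 24 * (2 * ((m + 1).choose 2)) := by ring
    have l2 : 24 * (m * (m + 1)) = 6 * (2 * m) * (2 * m) + 12 * (2 * m) := by ring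
    have r1 : 24 * (e + 5).choose 4 = (e + 2) * (e + 3) * (e + 4) * (e + 5) := h4c (e + 2)
    have r2 : 24 * (e + 4).choose 4 = (e + 1) * (e + 2) * (e + 3) * (e + 4) := h4c (e + 1)
    have r3 : 24 * (e + 3).choose 4 = e * (e + 1) * (e + 2) * (e + 3) := h4c e
    have hL : e + 1 + 2 = e + 3 := by omega
    have hR4 : e + 1 + 4 = e + 5 := by omega
    have hR3 : e + 1 + 3 = e + 4 := by omega
    rw [hL, hR4, hR3]
    calc 48 * ((m + 1).choose 2)
        = 24 * (2 * ((m + 1).choose 2)) := by ring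
      _ = 24 * (m * (m + 1)) := by rw [h2c m]
      _ = 6 * (2 * m) * (2 * m) + 12 * (2 * m) := by ring
      _ = 6 * ((e + 2) * (e + 3)) * ((e + 2) * (e + 3)) + 12 * ((e + 2) * (e + 3)) := by
          rw [hm]
      _ = 2 * (24 * (e + 5).choose 4) + 2 * (24 * (e + 4).choose 4)
            + 2 * (24 * (e + 3).choose 4) := by rw [r1, r2, r3]; ring
      _ = 48 * ((e + 5).choose 4 + (e + 4).choose 4 + (e + 3).choose 4) := by ring

end HilbertAux

open HilbertAux in
/-- the space of homogeneous polynomials of degree 2d lying in 𝓘(M_{3×2})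
has dimension C(d+4,4) + C(d+3,4) + C(d+2,4); i.e. the Hilbert series of 𝓘(M_{3×2})
is (1+q+q²)/(1-q)⁵. -/
theorem hilbert_series_invariants_two_three (d : ℕ) :
    let S : Submodule ℂ (P 2 3) :=
      Subalgebra.toSubmodule (InvAlg 2 3) ⊓ homogeneousSubmodule (Fin 3 × Fin 2) ℂ (2 * d)
    FiniteDimensional ℂ S ∧
    Module.finrank ℂ S =
      Nat.choose (d + 4) 4 + Nat.choose (d + 3) 4 + Nat.choose (d + 2) 4 := by
  intro S
  have hS : S = Vd d := inv_inf_homog_eq_Vd d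
  constructor
  · rw [hS, ← span_bFam]
    exact FiniteDimensional.span_of_finite ℂ (Set.finite_range _)
  · rw [hS, finrank_Vd, card_sym2_sym, arith_main]
end
end

section
/- Let n, k ≥ 1, let s ≥ 1, and let c_1 ≥ c_2 ≥ … ≥ c_s ≥ 1 be integers with c_1 ≤ min(n, k) and, if s ≥ 2, c_1 + c_2 ≤ n. For each 1 ≤ m ≤ s choose a subset I_m ⊆ {1, …, k} with |I_m| = c_m, and let P_m ∈ 𝒫(M_{k×n}) be the determinant of the c_m×c_m submatrix of the variable matrix x = (x_{ij}) on the rows indexed by I_m (in increasing order) and the last c_m columns n − c_m + 1, …, n. Then the product P_1·P_2⋯P_s is a harmonic polynomial, i.e. it is annihilated by every operator Δ_{ij}, 1 ≤ i, j ≤ k. -/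
open MvPolynomial TensorProduct

set_option synthInstance.maxHeartbeats 1000000
set_option maxHeartbeats 1000000

noncomputable section

/-!
Each minor is a determinant of variables, hence alternating in its columns, so its mixed second
derivative `∂_(i,b) ∂_(j,b')` is antisymmetric in `(b, b')`: reindexing the permutation expansion
by a transposition of the two columns flips the sign. `Δ_ij` sums this derivative over the pairs
`(m, n+1-m)`, and the involution `m ↦ n+1-m` cancels the sum, so every minor is harmonic.
In `Δ_ij (f g)` the cross terms `∂_(i,m) f · ∂_(j,n+1-m) g` vanish when `f` only involves the last
`a` columns and `g` the last `b` columns with `a + b ≤ n`, because `m` and `n+1-m` cannot both lie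
in the respective ranges; the size conditions give this for every pair of factors.
-/

open Finset Equiv

theorem Derivation.leibniz_finset_prod {R A ι : Type*} [CommSemiring R] [CommSemiring A]
    [Algebra R A] [DecidableEq ι] (D : Derivation R A A) (s : Finset ι) (f : ι → A) :
    D (∏ i ∈ s, f i) = ∑ i ∈ s, (∏ j ∈ s.erase i, f j) * D (f i) := by
  induction s using Finset.induction_on with
  | empty => simp
  | insert a s ha ih =>
    rw [prod_insert ha, sum_insert ha, erase_insert ha, D.leibniz, ih, smul_eq_mul, smul_eq_mul,
      mul_sum, add_comm]
    congr 1
    refine sum_congr rfl fun i hi => ?_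
    rw [erase_insert_of_ne (ne_of_mem_of_not_mem hi ha).symm,
      prod_insert fun h => ha (mem_of_mem_erase h), mul_assoc]

theorem Function.Involutive.sum_apply_eq_zero_of_antisymm {α M : Type*} [Fintype α]
    [AddCommGroup M] [IsAddTorsionFree M] {e : α → α} (he : Function.Involutive e)
    {G : α → α → M} (hG : ∀ a b, G a b = -G b a) : ∑ a, G a (e a) = 0 := by
  rw [← self_eq_neg]
  calc ∑ a, G a (e a) = ∑ a, G (e a) (e (e a)) := (Equiv.sum_comp he.toPerm _).symm
    _ = ∑ a, -G a (e a) := by simp only [he _]; exact sum_congr rfl fun a _ => hG _ _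
    _ = -∑ a, G a (e a) := sum_neg_distrib _

namespace MvPolynomial

theorem pderiv_eq_zero_of_mem_supported_s15 {R σ : Type*} [CommSemiring R] {s : Set σ}
    {f : MvPolynomial σ R} (hf : f ∈ supported R s) {u : σ} (hu : u ∉ s) : pderiv u f = 0 :=
  pderiv_eq_zero_of_notMem_vars fun h => hu (mem_supported.1 hf h)

section Products

variable {R σ ι : Type*} [CommSemiring R] [DecidableEq σ] [DecidableEq ι]

theorem pderiv_prod_X (s : Finset ι) (w : ι → σ) (u : σ) :
    pderiv u (∏ q ∈ s, (X (w q) : MvPolynomial σ R)) =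
      ∑ q ∈ s, if w q = u then ∏ q' ∈ s.erase q, X (w q') else 0 := by
  rw [Derivation.leibniz_finset_prod]
  refine sum_congr rfl fun q _ => ?_
  split_ifs with h
  · rw [h, pderiv_X_self, mul_one]
  · rw [pderiv_X_of_ne h, mul_zero]

theorem pderiv_pderiv_prod_X [Fintype ι] (w : ι → σ) (u v : σ) :
    pderiv u (pderiv v (∏ q, (X (w q) : MvPolynomial σ R))) =
      ∑ q₁, ∑ q₂, if q₁ ≠ q₂ ∧ w q₁ = u ∧ w q₂ = v then ∏ q ∈ {q₁, q₂}ᶜ, X (w q) else 0 := by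
  rw [pderiv_prod_X, map_sum, sum_comm]
  refine sum_congr rfl fun q₂ _ => ?_
  by_cases hv : w q₂ = v
  · simp only [hv, if_true, and_true, pderiv_prod_X, ← filter_ne' univ q₂, sum_filter, ite_and,
      compl_insert, compl_singleton]
  · simp [hv]

end Products

section Determinants

variable {R ι κ ν : Type*} [CommRing R] [Fintype ν] [DecidableEq ν]

theorem det_X_mem_supported (r : ν → ι) (col : ν → κ) :
    (Matrix.of fun p q => (X (r p, col q) : MvPolynomial (ι × κ) R)).det ∈
      supported R (Prod.snd ⁻¹' Set.range col) := by
  rw [Matrix.det_apply, supported_eq_adjoin_X]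
  refine sum_mem fun τ _ => ?_
  rw [Units.smul_def]
  refine zsmul_mem (Subalgebra.prod_mem _ fun q _ => Algebra.subset_adjoin ?_) _
  exact Set.mem_image_of_mem X (Set.mem_range_self q)

variable [DecidableEq ι] [DecidableEq κ]

theorem pderiv_pderiv_det_X (r : ν → ι) (col : ν → κ) (i j : ι) (b b' : κ) :
    pderiv (i, b) (pderiv (j, b')
        (Matrix.of fun p q => (X (r p, col q) : MvPolynomial (ι × κ) R)).det) =
      ∑ q₁, ∑ q₂, ∑ τ : Perm ν, Perm.sign τ •
        if q₁ ≠ q₂ ∧ (r (τ q₁), col q₁) = (i, b) ∧ (r (τ q₂), col q₂) = (j, b')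
        then ∏ q ∈ {q₁, q₂}ᶜ, X (r (τ q), col q) else 0 := by
  simp only [Matrix.det_apply, Matrix.of_apply, map_sum, Units.smul_def, map_zsmul,
    pderiv_pderiv_prod_X, smul_sum]
  rw [sum_comm]
  refine sum_congr rfl fun q₁ _ => ?_
  rw [sum_comm]

theorem pderiv_pderiv_det_X_antisymm (r : ν → ι) (col : ν → κ) (i j : ι) (b b' : κ) :
    pderiv (i, b) (pderiv (j, b')
        (Matrix.of fun p q => (X (r p, col q) : MvPolynomial (ι × κ) R)).det) =
      -pderiv (i, b') (pderiv (j, b)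
        (Matrix.of fun p q => (X (r p, col q) : MvPolynomial (ι × κ) R)).det) := by
  rw [pderiv_pderiv_det_X, pderiv_pderiv_det_X, sum_comm, ← sum_neg_distrib]
  refine sum_congr rfl fun q₁ _ => ?_
  rw [← sum_neg_distrib]
  refine sum_congr rfl fun q₂ _ => ?_
  by_cases hq : q₁ = q₂
  · simp [hq]
  rw [← Equiv.sum_comp (Equiv.mulRight (swap q₁ q₂)), ← sum_neg_distrib]
  refine sum_congr rfl fun τ _ => ?_
  have hprod : ∏ q ∈ {q₂, q₁}ᶜ, (X (r (τ (swap q₁ q₂ q)), col q) : MvPolynomial (ι × κ) R) =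
      ∏ q ∈ {q₁, q₂}ᶜ, X (r (τ q), col q) := by
    rw [pair_comm]
    refine prod_congr rfl fun q hq' => ?_
    simp only [mem_compl, mem_insert, mem_singleton, not_or] at hq'
    rw [swap_apply_of_ne_of_ne hq'.1 hq'.2]
  simp only [Equiv.coe_mulRight, Perm.sign_mul, Perm.sign_swap hq, mul_neg, mul_one,
    Units.neg_smul, Perm.mul_apply, swap_apply_left, swap_apply_right, Prod.mk.injEq, hprod]
  congr 3
  exact propext (by tauto)

end Determinants

end MvPolynomial

section Harmonic

variable {n k : ℕ}

theorem Δop_apply (i j : Fin k) (f : P n k) :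
    Δop n k i j f = ∑ m : Fin n, pderiv (i, m) (pderiv (j, m.rev) f) := by
  rw [Δop, LinearMap.sum_apply]
  rfl

theorem mem_Harm {f : P n k} : f ∈ Harm n k ↔ ∀ i j : Fin k, Δop n k i j f = 0 := by
  simp [Harm, Submodule.mem_iInf, LinearMap.mem_ker]

theorem one_mem_Harm : (1 : P n k) ∈ Harm n k :=
  mem_Harm.2 fun i j => by simp [Δop_apply]

theorem det_X_mem_Harm {ν : Type*} [Fintype ν] [DecidableEq ν] (r : ν → Fin k)
    (col : ν → Fin n) : (Matrix.of fun p q => (X (r p, col q) : P n k)).det ∈ Harm n k :=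
  mem_Harm.2 fun i j => by
    rw [Δop_apply]
    exact Fin.rev_involutive.sum_apply_eq_zero_of_antisymm
      (pderiv_pderiv_det_X_antisymm r col i j)

theorem Δop_mul (i j : Fin k) (f g : P n k) :
    Δop n k i j (f * g) = Δop n k i j f * g + f * Δop n k i j g +
      ∑ m : Fin n, (pderiv (i, m) f * pderiv (j, m.rev) g +
        pderiv (j, m.rev) f * pderiv (i, m) g) := by
  simp only [Δop_apply, pderiv_mul, map_add, sum_mul, mul_sum, ← sum_add_distrib]
  refine sum_congr rfl fun m _ => ?_
  ring

theorem mul_mem_Harm {S T : Set (Fin n)} {f g : P n k} (hf : f ∈ Harm n k) (hg : g ∈ Harm n k)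
    (hfS : f ∈ supported ℂ (Prod.snd ⁻¹' S)) (hgT : g ∈ supported ℂ (Prod.snd ⁻¹' T))
    (hST : ∀ x ∈ S, x.rev ∉ T) : f * g ∈ Harm n k := by
  have hcross : ∀ (a b : Fin k) (x : Fin n), pderiv (a, x) f * pderiv (b, x.rev) g = 0 := by
    intro a b x
    by_cases hx : x ∈ S
    · rw [pderiv_eq_zero_of_mem_supported_s15 hgT (hST x hx), mul_zero]
    · rw [pderiv_eq_zero_of_mem_supported_s15 hfS hx, zero_mul]
  refine mem_Harm.2 fun i j => ?_
  rw [Δop_mul, mem_Harm.1 hf, mem_Harm.1 hg, zero_mul, mul_zero, zero_add, zero_add]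
  refine sum_eq_zero fun m _ => ?_
  have h := hcross j i m.rev
  rw [Fin.rev_rev] at h
  rw [hcross, h, add_zero]

theorem prod_mem_Harm {ι : Type*} [DecidableEq ι] (s : Finset ι) (f : ι → P n k)
    (S : ι → Set (Fin n)) (hf : ∀ m ∈ s, f m ∈ Harm n k)
    (hfS : ∀ m ∈ s, f m ∈ supported ℂ (Prod.snd ⁻¹' S m))
    (hS : ∀ m ∈ s, ∀ m' ∈ s, m ≠ m' → ∀ x ∈ S m, x.rev ∉ S m') :
    ∏ m ∈ s, f m ∈ Harm n k ∧ ∏ m ∈ s, f m ∈ supported ℂ (Prod.snd ⁻¹' ⋃ m ∈ s, S m) := by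
  induction s using Finset.induction_on with
  | empty => exact ⟨one_mem_Harm, one_mem _⟩
  | insert a s ha ih =>
    obtain ⟨ihHarm, ihSupp⟩ := ih (fun m hm => hf m (mem_insert_of_mem hm))
      (fun m hm => hfS m (mem_insert_of_mem hm))
      (fun m hm m' hm' => hS m (mem_insert_of_mem hm) m' (mem_insert_of_mem hm'))
    have hfa := hfS a (mem_insert_self a s)
    rw [prod_insert ha, set_biUnion_insert, Set.preimage_union]
    refine ⟨mul_mem_Harm (hf a (mem_insert_self a s)) ihHarm hfa ihSupp ?_,
      mul_mem (supported_mono Set.subset_union_left hfa)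
        (supported_mono Set.subset_union_right ihSupp)⟩
    simp only [Set.mem_iUnion, not_exists]
    exact fun x hx m hm => hS a (mem_insert_self a s) m (mem_insert_of_mem hm)
      (fun h => ha (h ▸ hm)) x hx

end Harmonic

theorem Antitone.add_le_of_lt {s n : ℕ} {c : Fin s → ℕ} (hc : Antitone c) (hs : 0 < s)
    (h01 : ∀ h2 : 2 ≤ s, c ⟨0, hs⟩ + c ⟨1, h2⟩ ≤ n) {m m' : Fin s} (hmm' : m < m') :
    c m + c m' ≤ n := by
  have h2 : 2 ≤ s := by omega
  calc c m + c m' ≤ c ⟨0, hs⟩ + c ⟨1, h2⟩ :=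
        add_le_add (hc (Fin.mk_le_of_le_val (Nat.zero_le _))) (hc (Fin.mk_le_of_le_val (by omega)))
    _ ≤ n := h01 h2

/-- a product of right-justified minors of the variable matrix, whose
sizes c_1 ≥ … ≥ c_s ≥ 1 satisfy c_1 ≤ min(n,k) and (if s ≥ 2) c_1 + c_2 ≤ n, is a
harmonic polynomial. Here the m-th factor is the determinant of the submatrix of x on
the rows indexed by the strictly increasing map `rows m` and the last c_m columns. -/
theorem product_of_minors_harmonic (n k s : ℕ) (hs : 0 < s)
    (c : Fin s → ℕ)
    (hanti : ∀ i j : Fin s, i ≤ j → c j ≤ c i)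
    (hc1n : c ⟨0, hs⟩ ≤ n)
    (hc12 : ∀ h2 : 2 ≤ s, c ⟨0, hs⟩ + c ⟨1, h2⟩ ≤ n)
    (rows : ∀ m : Fin s, Fin (c m) → Fin k) :
    (∏ m : Fin s, Matrix.det (Matrix.of fun p q : Fin (c m) =>
      (X (rows m p, ⟨n - c m + q.val, by
          have hq := q.isLt
          have h1 := hanti ⟨0, hs⟩ m (Fin.mk_le_of_le_val (Nat.zero_le _))
          omega⟩) : P n k))) ∈ Harm n k := by
  have hpair : ∀ m m' : Fin s, m ≠ m' → c m + c m' ≤ n := fun m m' hne =>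
    hne.lt_or_gt.elim (Antitone.add_le_of_lt hanti hs hc12)
      fun h => add_comm (c m) (c m') ▸ Antitone.add_le_of_lt hanti hs hc12 h
  refine (prod_mem_Harm univ _ (fun m => {x | n - c m ≤ x.val}) (fun m _ => det_X_mem_Harm _ _)
    (fun m _ => supported_mono (Set.preimage_mono ?_) (det_X_mem_supported _ _)) ?_).1
  · rintro _ ⟨q, rfl⟩
    exact Nat.le_add_right _ _
  · intro m _ m' _ hne x hx hx'
    have := hpair m m' hne
    simp only [Set.mem_ofPred_eq, Fin.val_rev] at hx hx'
    omega
end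
end

section
/- Let n = 2 and k = 2. The three monomial pairs give F = span{x_{12}², x_{12}x_{22}, x_{22}²} ⊆ 𝓗, and the element D = 2·r_{12} ⊗ (x_{12}·x_{22}) − r_{11} ⊗ x_{22}² − r_{22} ⊗ x_{12}² of 𝓘 ⊗_ℂ 𝓗 is nonzero and satisfies φ^{(2,2)}(D) = 0; in particular Ker φ^{(2,2)} ≠ 0 and separation of variables fails to be unique for k = 2 vector variables in dimension n = 2. -/
open MvPolynomial TensorProduct

set_option synthInstance.maxHeartbeats 1000000
set_option maxHeartbeats 1000000

noncomputable section

lemma aux_rev0 : (0 : Fin 2).rev = 1 := by decide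
lemma aux_rev1 : (1 : Fin 2).rev = 0 := by decide
lemma aux_last1 : Fin.last 1 = 1 := rfl

lemma aux_rpoly_eq (i j : Fin 2) :
    rpoly 2 2 i j = X (i,0) * X (j,1) + X (i,1) * X (j,0) := by
  simp [rpoly, Fin.sum_univ_two, aux_rev0, aux_rev1, aux_last1]

lemma aux_harm_h12 :
    X ((0 : Fin 2), (1 : Fin 2)) * X ((1 : Fin 2), (1 : Fin 2)) ∈ Harm 2 2 := by
  simp only [Harm, Submodule.mem_iInf, LinearMap.mem_ker]
  intro i j
  fin_cases i <;> fin_cases j <;>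
    simp [Δop, Fin.sum_univ_two, aux_rev0, aux_rev1, aux_last1, pderiv_mul, pderiv_X,
      Pi.single_apply, Prod.ext_iff]

lemma aux_harm_h11 : (X ((0 : Fin 2), (1 : Fin 2)) : P 2 2) ^ 2 ∈ Harm 2 2 := by
  simp only [Harm, Submodule.mem_iInf, LinearMap.mem_ker]
  intro i j
  fin_cases i <;> fin_cases j <;>
    simp [Δop, Fin.sum_univ_two, aux_rev0, aux_rev1, aux_last1, pderiv_mul, pderiv_X, pow_two,
      Pi.single_apply, Prod.ext_iff]

lemma aux_harm_h22 : (X ((1 : Fin 2), (1 : Fin 2)) : P 2 2) ^ 2 ∈ Harm 2 2 := by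
  simp only [Harm, Submodule.mem_iInf, LinearMap.mem_ker]
  intro i j
  fin_cases i <;> fin_cases j <;>
    simp [Δop, Fin.sum_univ_two, aux_rev0, aux_rev1, aux_last1, pderiv_mul, pderiv_X, pow_two,
      Pi.single_apply, Prod.ext_iff]

lemma aux_phi_tmul (a : InvAlg 2 2) (b : Harm 2 2) :
    φ 2 2 (a ⊗ₜ b) = (a : P 2 2) * (b : P 2 2) := rfl

def auxv : Fin 2 × Fin 2 → ℂ := fun p => if p = (0,0) ∨ p = (1,1) then 1 else 0

def auxL : (InvAlg 2 2) ⊗[ℂ] (Harm 2 2) →ₗ[ℂ] ℂ :=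
  (TensorProduct.lid ℂ ℂ).toLinearMap ∘ₗ TensorProduct.map
    ((MvPolynomial.aeval auxv).toLinearMap ∘ₗ (InvAlg 2 2).val.toLinearMap)
    ((MvPolynomial.aeval (fun _ => (1:ℂ))).toLinearMap ∘ₗ (Harm 2 2).subtype)

lemma auxL_tmul (a : InvAlg 2 2) (b : Harm 2 2) :
    auxL (a ⊗ₜ b) = aeval auxv (a : P 2 2) * aeval (fun _ => (1:ℂ)) (b : P 2 2) := by
  simp [auxL, TensorProduct.lid_tmul, smul_eq_mul]

/-- for n = k = 2 the span of x_{12}², x_{12}x_{22}, x_{22}² consists of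
harmonics, and D = 2·r_{12} ⊗ x_{12}x_{22} - r_{11} ⊗ x_{22}² - r_{22} ⊗ x_{12}² is a
nonzero element of 𝓘 ⊗ 𝓗 with φ^{(2,2)}(D) = 0; hence Ker φ^{(2,2)} ≠ 0. -/
theorem kernel_nonzero_two_two :
    Submodule.span ℂ {(X ((0 : Fin 2), (1 : Fin 2)) ^ 2 : P 2 2),
        X ((0 : Fin 2), (1 : Fin 2)) * X ((1 : Fin 2), (1 : Fin 2)),
        X ((1 : Fin 2), (1 : Fin 2)) ^ 2} ≤ Harm 2 2 ∧
    (∀ (h12 : X ((0 : Fin 2), (1 : Fin 2)) * X ((1 : Fin 2), (1 : Fin 2)) ∈ Harm 2 2)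
        (h22 : (X ((1 : Fin 2), (1 : Fin 2)) : P 2 2) ^ 2 ∈ Harm 2 2)
        (h11 : (X ((0 : Fin 2), (1 : Fin 2)) : P 2 2) ^ 2 ∈ Harm 2 2),
      let D : (InvAlg 2 2) ⊗[ℂ] (Harm 2 2) :=
        (2 : ℂ) • ((rInv 2 2 0 1) ⊗ₜ[ℂ]
            (⟨X ((0 : Fin 2), (1 : Fin 2)) * X ((1 : Fin 2), (1 : Fin 2)), h12⟩ : Harm 2 2)) -
          (rInv 2 2 0 0) ⊗ₜ[ℂ] (⟨X ((1 : Fin 2), (1 : Fin 2)) ^ 2, h22⟩ : Harm 2 2) -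
          (rInv 2 2 1 1) ⊗ₜ[ℂ] (⟨X ((0 : Fin 2), (1 : Fin 2)) ^ 2, h11⟩ : Harm 2 2)
      D ≠ 0 ∧ φ 2 2 D = 0) ∧
    LinearMap.ker (φ 2 2) ≠ ⊥ := by
  refine ⟨?_, ?_, ?_⟩
  · rw [Submodule.span_le]
    rintro p (rfl | rfl | rfl)
    · exact aux_harm_h11
    · exact aux_harm_h12
    · exact aux_harm_h22
  · intro h12 h22 h11 D
    have hL : auxL D = 2 := by
      simp only [D, map_sub, map_smul, auxL_tmul, rInv, aux_rpoly_eq, map_add, map_mul,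
        aeval_X, map_pow]
      norm_num [auxv]
    constructor
    · intro h0
      rw [h0, map_zero] at hL
      exact two_ne_zero hL.symm
    · simp only [D, map_sub, map_smul, aux_phi_tmul, rInv, aux_rpoly_eq,
        MvPolynomial.smul_eq_C_mul, map_ofNat]
      ring
  · set D : (InvAlg 2 2) ⊗[ℂ] (Harm 2 2) :=
      (2 : ℂ) • ((rInv 2 2 0 1) ⊗ₜ[ℂ]
          (⟨X ((0 : Fin 2), (1 : Fin 2)) * X ((1 : Fin 2), (1 : Fin 2)), aux_harm_h12⟩ : Harm 2 2)) -
        (rInv 2 2 0 0) ⊗ₜ[ℂ] (⟨X ((1 : Fin 2), (1 : Fin 2)) ^ 2, aux_harm_h22⟩ : Harm 2 2) -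
        (rInv 2 2 1 1) ⊗ₜ[ℂ] (⟨X ((0 : Fin 2), (1 : Fin 2)) ^ 2, aux_harm_h11⟩ : Harm 2 2) with hDdef
    have hL : auxL D = 2 := by
      simp only [hDdef, map_sub, map_smul, auxL_tmul, rInv, aux_rpoly_eq, map_add, map_mul,
        aeval_X, map_pow]
      norm_num [auxv]
    have hDne : D ≠ 0 := by
      intro h0
      rw [h0, map_zero] at hL
      exact two_ne_zero hL.symm
    have hker : D ∈ LinearMap.ker (φ 2 2) := by
      rw [LinearMap.mem_ker]
      simp only [hDdef, map_sub, map_smul, aux_phi_tmul, rInv, aux_rpoly_eq,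
        MvPolynomial.smul_eq_C_mul, map_ofNat]
      ring
    intro hbot
    rw [hbot, Submodule.mem_bot] at hker
    exact hDne hker
end
end
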